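/- arXiv:1304.6055 — 8 statements merged into one kernel-verified Lean document; each statement's English description precedes it below -/
import Mathlib

section
/- Let d be an odd positive integer and let t ∈ {2, −2}. Then there exists a monic polynomial τ(x) ∈ ℤ[x] of degree (d−1)/2 such that T_d(x) − t = (x − t)·τ(x)². -/
open Polynomial

/-- The monic Chebyshev polynomial of the first kind of degree `d`,
the unique monic integer polynomial with `T_d(z + z⁻¹) = z^d + z^{-d}`.
It coincides with the Dickson polynomial of the first kind with parameter `a = 1`. -/
noncomputable def chebT (d : ℕ) : Polynomial ℤ := Polynomial.dickson 1 1 d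

lemma chebT_zero : chebT 0 = 2 := by
  simp [chebT, Polynomial.dickson_zero]
  norm_num

lemma chebT_one : chebT 1 = X := by simp [chebT]

lemma chebT_add_two (n : ℕ) : chebT (n + 2) = X * chebT (n + 1) - chebT n := by
  simp [chebT, Polynomial.dickson_add_two]

lemma chebT_congr {a b : ℕ} (h : a = b) : chebT a = chebT b := by rw [h]

/-- Monicity and degree, proved together by two-step induction. -/
lemma chebT_monic_deg : ∀ n : ℕ, 1 ≤ n → (chebT n).Monic ∧ (chebT n).natDegree = n := by
  intro n
  induction n using Nat.strong_induction_on with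
  | _ n ih =>
    match n with
    | 0 => intro h; omega
    | 1 => intro _; rw [chebT_one]; exact ⟨monic_X, natDegree_X⟩
    | (m + 2) =>
      intro _
      obtain ⟨hmon, hdeg⟩ := ih (m + 1) (by omega) (by omega)
      have hX : (X * chebT (m + 1)).Monic := (monic_X).mul hmon
      have hXdeg : (X * chebT (m + 1)).natDegree = m + 2 := by
        rw [natDegree_mul X_ne_zero hmon.ne_zero, natDegree_X, hdeg]
        omega
      have hle : (chebT m).natDegree ≤ m := by
        rcases Nat.eq_zero_or_pos m with rfl | h
        · rw [chebT_zero]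
          simp [Polynomial.natDegree_ofNat]
        · exact le_of_eq (ih m (by omega) h).2
      have hlt : (chebT m).natDegree < (X * chebT (m + 1)).natDegree := by omega
      rw [chebT_add_two]
      constructor
      · exact hX.sub_of_left (Polynomial.degree_lt_degree hlt)
      · rw [Polynomial.natDegree_sub_eq_left_of_natDegree_lt hlt, hXdeg]

lemma chebT_monic {n : ℕ} (h : 1 ≤ n) : (chebT n).Monic := (chebT_monic_deg n h).1

lemma chebT_natDegree {n : ℕ} (h : 1 ≤ n) : (chebT n).natDegree = n := (chebT_monic_deg n h).2

/-- Product formula: `T_{n+k} T_n = T_{2n+k} + T_k`. -/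
lemma chebT_mul : ∀ n k : ℕ, chebT (n + k) * chebT n = chebT (2 * n + k) + chebT k := by
  intro n
  induction n using Nat.strong_induction_on with
  | _ n ih =>
    match n with
    | 0 =>
      intro k
      simp only [Nat.zero_add, Nat.zero_mul, Nat.mul_zero]
      rw [chebT_zero]
      ring
    | 1 =>
      intro k
      rw [chebT_one, chebT_congr (show 1 + k = k + 1 by ring),
        chebT_congr (show 2 * 1 + k = k + 2 by ring), chebT_add_two]
      ring
    | (m + 2) =>
      intro k
      have h1 := ih (m + 1) (by omega) (k + 1)
      have h0 := ih m (by omega) (k + 2)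
      rw [chebT_congr (show m + 1 + (k + 1) = m + 2 + k by ring),
        chebT_congr (show 2 * (m + 1) + (k + 1) = 2 * m + k + 3 by ring)] at h1
      rw [chebT_congr (show m + (k + 2) = m + 2 + k by ring),
        chebT_congr (show 2 * m + (k + 2) = 2 * m + k + 2 by ring)] at h0
      have hrec : chebT (m + 2) = X * chebT (m + 1) - chebT m := chebT_add_two m
      have hrecM : chebT (2 * m + k + 4) = X * chebT (2 * m + k + 3) - chebT (2 * m + k + 2) := by
        have := chebT_add_two (2 * m + k + 2)
        rwa [chebT_congr (show 2 * m + k + 2 + 2 = 2 * m + k + 4 by ring),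
          chebT_congr (show 2 * m + k + 2 + 1 = 2 * m + k + 3 by ring)] at this
      have hreck : chebT (k + 2) = X * chebT (k + 1) - chebT k := chebT_add_two k
      rw [chebT_congr (show 2 * (m + 2) + k = 2 * m + k + 4 by ring), hrec, hrecM]
      linear_combination X * h1 - h0 - hreck

lemma chebT_sq (n : ℕ) : chebT n ^ 2 = chebT (2 * n) + 2 := by
  have := chebT_mul n 0
  rw [add_zero, chebT_zero] at this
  rw [sq, this, add_zero]

lemma chebT_mul_succ (n : ℕ) : chebT (n + 1) * chebT n = chebT (2 * n + 1) + X := by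
  have := chebT_mul n 1
  rwa [chebT_one] at this

/-- The partial sum `τ_m = T_0 + T_1 + ⋯ + T_m - 1`. -/
noncomputable def tauAux (m : ℕ) : Polynomial ℤ := (Finset.range (m + 1)).sum chebT - 1

lemma tauAux_zero : tauAux 0 = 1 := by
  simp [tauAux, chebT_zero]
  norm_num

lemma tauAux_succ (m : ℕ) : tauAux (m + 1) = tauAux m + chebT (m + 1) := by
  simp [tauAux, Finset.sum_range_succ]
  ring

lemma tauAux_monic_deg : ∀ m : ℕ, (tauAux m).Monic ∧ (tauAux m).natDegree = m := by
  intro m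
  induction m with
  | zero => rw [tauAux_zero]; exact ⟨monic_one, natDegree_one⟩
  | succ m ih =>
    obtain ⟨hmon, hdeg⟩ := ih
    rw [tauAux_succ]
    have hc := chebT_monic (n := m + 1) (by omega)
    have hcd := chebT_natDegree (n := m + 1) (by omega)
    have hlt : (tauAux m).natDegree < (chebT (m + 1)).natDegree := by omega
    constructor
    · rw [add_comm]; exact hc.add_of_left (Polynomial.degree_lt_degree hlt)
    · rw [add_comm, Polynomial.natDegree_add_eq_left_of_natDegree_lt hlt, hcd]

/-- `(X - 2) τ_m = T_{m+1} - T_m`. -/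
lemma tauAux_telescope : ∀ m : ℕ, (X - 2) * tauAux m = chebT (m + 1) - chebT m := by
  intro m
  induction m with
  | zero => rw [tauAux_zero, chebT_one, chebT_zero]; ring
  | succ m ih =>
    rw [tauAux_succ, mul_add, ih, chebT_congr (show m + 1 + 1 = m + 2 by omega), chebT_add_two]
    ring

/-- The key factorization for `t = 2`. -/
lemma tauAux_key : ∀ m : ℕ, chebT (2 * m + 1) - 2 = (X - 2) * tauAux m ^ 2 := by
  intro m
  induction m with
  | zero => rw [tauAux_zero, chebT_one]; ring
  | succ m ih =>
    rw [tauAux_succ]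
    have expand : (X - 2) * (tauAux m + chebT (m + 1)) ^ 2
        = (X - 2) * tauAux m ^ 2 + 2 * ((X - 2) * tauAux m) * chebT (m + 1)
          + (X - 2) * chebT (m + 1) ^ 2 := by ring
    rw [expand, ← ih, tauAux_telescope]
    have hsq2 : chebT (m + 1) * chebT (m + 1) = chebT (2 * m + 2) + 2 := by
      have := chebT_sq (m + 1)
      rw [sq] at this
      rwa [chebT_congr (show 2 * (m + 1) = 2 * m + 2 by ring)] at this
    have hms : chebT (m + 1) * chebT m = chebT (2 * m + 1) + X := chebT_mul_succ m
    have hrec : chebT (2 * m + 3) = X * chebT (2 * m + 2) - chebT (2 * m + 1) := by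
      have := chebT_add_two (2 * m + 1)
      rwa [chebT_congr (show 2 * m + 1 + 2 = 2 * m + 3 by ring),
        chebT_congr (show 2 * m + 1 + 1 = 2 * m + 2 by ring)] at this
    rw [chebT_congr (show 2 * (m + 1) + 1 = 2 * m + 3 by ring), hrec]
    linear_combination (-X : ℤ[X]) * hsq2 + 2 * hms

/-- Composition with `-X` gives `(-1)^n` times the Chebyshev polynomial. -/
lemma chebT_comp_neg : ∀ n : ℕ, (chebT n).comp (-X) = (-1) ^ n * chebT n := by
  intro n
  induction n using Nat.strong_induction_on with
  | _ n ih =>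
    match n with
    | 0 => rw [chebT_zero]; simp
    | 1 => rw [chebT_one]; simp
    | (m + 2) =>
      have h1 := ih (m + 1) (by omega)
      have h0 := ih m (by omega)
      rw [chebT_add_two, sub_comp, mul_comp, X_comp, h1, h0]
      ring

theorem stmt0 (d : ℕ) (hd : Odd d) (hpos : 0 < d) (t : ℤ) (ht : t = 2 ∨ t = -2) :
    ∃ τ : Polynomial ℤ, τ.Monic ∧ τ.natDegree = (d - 1) / 2 ∧
      chebT d - C t = (X - C t) * τ ^ 2 := by
  obtain ⟨m, rfl⟩ := hd
  have hm : (2 * m + 1 - 1) / 2 = m := by omega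
  have hC2 : (C (2 : ℤ) : Polynomial ℤ) = 2 := by norm_num
  rcases ht with rfl | rfl
  · refine ⟨tauAux m, (tauAux_monic_deg m).1, by rw [(tauAux_monic_deg m).2, hm], ?_⟩
    rw [hC2]
    exact tauAux_key m
  · -- t = -2 : compose the `t = 2` identity with `-X` and normalize the sign
    set σ : Polynomial ℤ := (-1) ^ m * (tauAux m).comp (-X) with hσ
    have hkey := tauAux_key m
    have hcomp := congrArg (fun p : Polynomial ℤ => p.comp (-X)) hkey
    simp only [sub_comp, mul_comp, X_comp, pow_comp, ofNat_comp] at hcomp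
    rw [chebT_comp_neg (2 * m + 1)] at hcomp
    have hpow : ((-1 : ℤ[X])) ^ (2 * m + 1) = -1 := by
      rw [pow_succ, pow_mul]; norm_num
    rw [hpow] at hcomp
    have hσsq : σ ^ 2 = ((tauAux m).comp (-X)) ^ 2 := by
      rw [hσ, mul_pow, ← pow_mul]
      have : ((-1 : ℤ[X])) ^ (m * 2) = 1 := by rw [pow_mul']; norm_num
      rw [this, one_mul]
    have hmain : chebT (2 * m + 1) - C (-2 : ℤ) = (X - C (-2 : ℤ)) * σ ^ 2 := by
      have hCneg : (C (-2 : ℤ) : Polynomial ℤ) = -2 := by norm_num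
      rw [hCneg, hσsq]
      linear_combination -hcomp
    -- monicity and degree of σ
    have hmon : (tauAux m).Monic := (tauAux_monic_deg m).1
    have hdeg : (tauAux m).natDegree = m := (tauAux_monic_deg m).2
    have hcompdeg : ((tauAux m).comp (-X)).natDegree = m := by
      rw [natDegree_comp]
      simp [hdeg]
    have hlead : ((tauAux m).comp (-X)).leadingCoeff = (-1) ^ m := by
      have := Polynomial.leadingCoeff_comp (p := tauAux m) (q := -X) (by simp)
      rw [this, hmon.leadingCoeff, one_mul, hdeg]
      simp
    have hCpow : ((-1 : ℤ[X])) ^ m = C ((-1 : ℤ) ^ m) := by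
      rw [map_pow, map_neg, map_one]
    have hσmon : σ.Monic := by
      unfold Polynomial.Monic
      rw [hσ, hCpow, Polynomial.leadingCoeff_mul, Polynomial.leadingCoeff_C, hlead,
        ← pow_add, ← two_mul, pow_mul]
      norm_num
    have hσdeg : σ.natDegree = m := by
      rw [hσ, hCpow, natDegree_C_mul, hcompdeg]
      exact pow_ne_zero _ (by norm_num)
    exact ⟨σ, hσmon, by rw [hσdeg, hm], hmain⟩
end

section
/- Let ℓ be an odd prime, n ≥ 1 an integer, and t ∈ {2, −2}. Then T_ℓ^n(x) − t factors over ℚ as T_ℓ^n(x) − t = (x − t)·φ_1(x)²·φ_2(x)²···φ_n(x)², where for each i = 1, …, n the polynomial φ_i(x) ∈ ℤ[x] is monic, irreducible over ℚ, and of degree (ℓ^i − ℓ^{i−1})/2. -/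
open Polynomial

/-- The `n`-fold composition `T_ℓ ∘ ⋯ ∘ T_ℓ` of the monic Chebyshev polynomial. -/
noncomputable def chebTIter (ℓ n : ℕ) : Polynomial ℤ :=
  ((chebT ℓ).comp)^[n] Polynomial.X


noncomputable def uu : ℕ → Polynomial ℤ
  | 0 => 1
  | 1 => X + 1
  | (k+2) => X * uu (k+1) - uu k

@[simp] lemma uu_zero : uu 0 = 1 := rfl
@[simp] lemma uu_one : uu 1 = X + 1 := rfl
lemma uu_add_two (k : ℕ) : uu (k+2) = X * uu (k+1) - uu k := rfl

lemma uu_aeval {R : Type*} [CommRing R] (w v : R) (h : w * v = 1) (k : ℕ) :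
    (w - v) * (aeval (w^2 + v^2) (uu k)) = w^(2*k+1) - v^(2*k+1) := by
  induction k using Nat.twoStepInduction with
  | zero => simp
  | one =>
    simp only [uu_one, map_add, aeval_X, map_one]
    linear_combination (v - w) * h
  | more k ih1 ih2 =>
    rw [uu_add_two]
    simp only [map_sub, map_mul, aeval_X]
    have e2 : 2*(k+2)+1 = 2*k+5 := by ring
    have e1 : 2*(k+1)+1 = 2*k+3 := by ring
    rw [e2]
    rw [e1] at ih2
    linear_combination (w^2+v^2) * ih2 - ih1 + ((w*v+1)*(w^(2*k+1)-v^(2*k+1))) * h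

lemma aeval_dickson {R : Type*} [CommRing R] (x : R) (m : ℕ) :
    aeval x (dickson 1 (1:ℤ) m) = eval x (dickson 1 (1:R) m) := by
  rw [aeval_def, ← eval_map, map_dickson]
  norm_num

lemma eq_of_aeval_real (p q : Polynomial ℤ)
    (h : ∀ w : ℝ, 1 < w → aeval (w^2 + (w⁻¹)^2) p = aeval (w^2 + (w⁻¹)^2) q) : p = q := by
  apply map_injective (Int.castRingHom ℝ) Int.cast_injective
  apply eq_of_infinite_eval_eq
  have hev : ∀ (x : ℝ) (r : Polynomial ℤ), eval x (map (Int.castRingHom ℝ) r) = aeval x r := by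
    intro x r
    rw [aeval_def, eval_map, algebraMap_int_eq]
  have hsub : (fun w : ℝ => w^2 + (w⁻¹)^2) '' (Set.Ioi 1) ⊆
      {x | eval x (map (Int.castRingHom ℝ) p) = eval x (map (Int.castRingHom ℝ) q)} := by
    rintro x ⟨w, hw, rfl⟩
    simp only [Set.mem_setOf_eq, hev]
    exact h w hw
  refine Set.Infinite.mono hsub ?_
  apply Set.Infinite.image ?_ (Set.Ioi_infinite 1)
  intro a ha b hb hab
  simp only [Set.mem_Ioi] at ha hb
  have ha0 : a ≠ 0 := by positivity
  have hb0 : b ≠ 0 := by positivity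
  have ia : a * a⁻¹ = 1 := mul_inv_cancel₀ ha0
  have ib : b * b⁻¹ = 1 := mul_inv_cancel₀ hb0
  have key : (a^2 - b^2) * (a^2 * b^2 - 1) = 0 := by
    linear_combination (a^2*b^2) * hab + (a^2*(b*b⁻¹+1))*ib - (b^2*(a*a⁻¹+1))*ia
  rcases mul_eq_zero.mp key with h1 | h2
  · have h3 : (a - b) * (a + b) = 0 := by linear_combination h1
    rcases mul_eq_zero.mp h3 with h4 | h5
    · linarith
    · linarith
  · have hab1 : (1:ℝ) < a*b := by nlinarith
    nlinarith

lemma base_id (s : ℕ) :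
    dickson 1 (1:ℤ) (2*s+1) - C 2 = (X - C 2) * (uu s)^2 := by
  apply eq_of_aeval_real
  intro w hw
  set v := w⁻¹ with hv
  have h : w * v = 1 := mul_inv_cancel₀ (by positivity)
  have h2 : (w^2) * (v^2) = 1 := by rw [← mul_pow, h, one_pow]
  have hm : w^(2*s+1) * v^(2*s+1) = 1 := by rw [← mul_pow, h, one_pow]
  have key := uu_aeval w v h s
  set A := aeval (w^2 + v^2) (uu s) with hA
  simp only [map_sub, map_mul, map_pow, aeval_X, aeval_C, aeval_dickson,
    dickson_one_one_eval_add_inv (w^2) (v^2) h2]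
  simp only [algebraMap_int_eq, eq_intCast]
  push_cast
  linear_combination (-((w-v)*A + (w^(2*s+1) - v^(2*s+1)))) * key + (-2*A^2)*h + 2*hm

lemma chebTIter_eq (ℓ n : ℕ) : chebTIter ℓ n = dickson 1 1 (ℓ^n) := by
  induction n with
  | zero => simp [chebTIter]
  | succ n ih =>
    rw [chebTIter, Function.iterate_succ_apply', ← chebTIter, ih, chebT,
      pow_succ', dickson_one_one_mul]

lemma step_id (s : ℕ) (b : ℕ)
    (hbase : dickson 1 (1:ℤ) (2*s+1) - C 2 = (X - C 2) * (uu s)^2) :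
    dickson 1 (1:ℤ) ((2*s+1) * b) - C 2
      = (dickson 1 1 b - C 2) * ((uu s).comp (dickson 1 1 b))^2 := by
  have h := congrArg (fun p : Polynomial ℤ => p.comp (dickson 1 1 b)) hbase
  simp only [sub_comp, mul_comp, pow_comp, X_comp, C_comp] at h
  rw [dickson_one_one_mul]
  exact h

lemma prod_id (ℓ s n : ℕ) (hs : ℓ = 2*s+1)
    (hbase : dickson 1 (1:ℤ) (2*s+1) - C 2 = (X - C 2) * (uu s)^2) :
    dickson 1 (1:ℤ) (ℓ^n) - C 2
      = (X - C 2) * ∏ i ∈ Finset.Icc 1 n, ((uu s).comp (dickson 1 1 (ℓ^(i-1))))^2 := by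
  induction n with
  | zero => simp
  | succ n ih =>
    rw [Finset.prod_Icc_succ_top (by omega : 1 ≤ n + 1)]
    have : ℓ^(n+1) = (2*s+1) * ℓ^n := by rw [pow_succ', hs]
    rw [this, step_id s _ hbase, ih]
    simp only [Nat.add_sub_cancel]
    ring

lemma dickson_comp_neg_X (m : ℕ) :
    (dickson 1 (1:ℤ) m).comp (-X) = (-1)^m * dickson 1 1 m := by
  induction m using Nat.twoStepInduction with
  | zero => norm_num
  | one => simp
  | more m ih1 ih2 =>
    rw [dickson_add_two]
    simp only [sub_comp, mul_comp, X_comp, C_comp, ih1, ih2, C_1, one_mul]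
    ring

lemma neg_id (ℓ s n : ℕ) (hodd : Odd (ℓ^n))
    (hprod : dickson 1 (1:ℤ) (ℓ^n) - C 2
      = (X - C 2) * ∏ i ∈ Finset.Icc 1 n, ((uu s).comp (dickson 1 1 (ℓ^(i-1))))^2) :
    dickson 1 (1:ℤ) (ℓ^n) + C 2
      = (X + C 2) * ∏ i ∈ Finset.Icc 1 n,
          (((uu s).comp (dickson 1 1 (ℓ^(i-1)))).comp (-X))^2 := by
  have h := congrArg (fun p : Polynomial ℤ => p.comp (-X)) hprod
  simp only [sub_comp, mul_comp, X_comp, C_comp, prod_comp, pow_comp] at h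
  rw [dickson_comp_neg_X, hodd.neg_one_pow] at h
  calc dickson 1 (1:ℤ) (ℓ^n) + C 2 = -(-X - C 2) * ∏ i ∈ Finset.Icc 1 n,
          (((uu s).comp (dickson 1 1 (ℓ^(i-1)))).comp (-X))^2 := by
        linear_combination -h
    _ = _ := by ring

noncomputable def liftP (g : Polynomial ℚ) : Polynomial ℚ :=
  ∑ j ∈ Finset.range (g.natDegree+1), C (g.coeff j) * X^(g.natDegree - j) * (X^2+1)^j

lemma aeval_liftP (g : Polynomial ℚ) (z : ℂ) (hz : z ≠ 0) :
    aeval z (liftP g) = z^(g.natDegree) * aeval (z + z⁻¹) g := by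
  rw [liftP, map_sum, aeval_eq_sum_range (R := ℚ) (z + z⁻¹), Finset.mul_sum]
  refine Finset.sum_congr rfl ?_
  intro j hj
  rw [Finset.mem_range] at hj
  have hj' : j ≤ g.natDegree := by omega
  simp only [map_mul, map_pow, aeval_X, aeval_C, map_add, map_one, Algebra.smul_def]
  have h1 : (z^2 + 1)^j = z^j * (z + z⁻¹)^j := by
    rw [← mul_pow, mul_add, mul_inv_cancel₀ hz]; ring_nf
  have h2 : z^(g.natDegree - j) * z^j = z^g.natDegree := by
    rw [← pow_add, Nat.sub_add_cancel hj']
  rw [h1]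
  linear_combination ((algebraMap ℚ ℂ) (g.coeff j) * (z+z⁻¹)^j) * h2

lemma natDegree_liftP_le (g : Polynomial ℚ) : (liftP g).natDegree ≤ 2 * g.natDegree := by
  apply natDegree_sum_le_of_forall_le
  intro j hj
  rw [Finset.mem_range] at hj
  calc (C (g.coeff j) * X^(g.natDegree - j) * (X^2+1)^j).natDegree
      ≤ (C (g.coeff j) * X^(g.natDegree - j)).natDegree + ((X^2+1:Polynomial ℚ)^j).natDegree :=
        natDegree_mul_le
    _ ≤ ((C (g.coeff j)).natDegree + (X^(g.natDegree - j):Polynomial ℚ).natDegree) + j * (X^2+1:Polynomial ℚ).natDegree :=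
        add_le_add natDegree_mul_le (natDegree_pow_le)
    _ ≤ (0 + (g.natDegree - j)) + j * 2 := by
        gcongr
        · simp [natDegree_C]
        · simp
        · have : (X^2+1:Polynomial ℚ) = X^2 + C 1 := by norm_num
          rw [this, natDegree_X_pow_add_C]
    _ ≤ 2 * g.natDegree := by omega

lemma liftP_coeff_top (g : Polynomial ℚ) (hg : g.Monic) :
    (liftP g).coeff (2 * g.natDegree) = 1 := by
  rw [liftP, finset_sum_coeff]
  have hmono : ((X^2+1:Polynomial ℚ)^g.natDegree).Monic := by
    have : (X^2+1:Polynomial ℚ) = X^2 + C 1 := by norm_num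
    rw [this]
    exact (monic_X_pow_add_C 1 (by norm_num)).pow _
  have hdeg : ((X^2+1:Polynomial ℚ)^g.natDegree).natDegree = 2 * g.natDegree := by
    have : (X^2+1:Polynomial ℚ) = X^2 + C 1 := by norm_num
    rw [natDegree_pow, this, natDegree_X_pow_add_C]; ring
  rw [Finset.sum_eq_single g.natDegree]
  · simp only [Nat.sub_self, pow_zero, mul_one]
    rw [← hdeg, coeff_C_mul, hmono.coeff_natDegree, hg.coeff_natDegree, mul_one]
  · intro j hj hne
    rw [Finset.mem_range] at hj
    have hj' : j ≤ g.natDegree := by omega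
    have hjlt : j < g.natDegree := by omega
    apply coeff_eq_zero_of_natDegree_lt
    calc (C (g.coeff j) * X^(g.natDegree - j) * (X^2+1)^j).natDegree
        ≤ (C (g.coeff j) * X^(g.natDegree - j)).natDegree + ((X^2+1:Polynomial ℚ)^j).natDegree :=
          natDegree_mul_le
      _ ≤ ((C (g.coeff j)).natDegree + (X^(g.natDegree - j):Polynomial ℚ).natDegree) + j * (X^2+1:Polynomial ℚ).natDegree :=
          add_le_add natDegree_mul_le (natDegree_pow_le)
      _ ≤ (0 + (g.natDegree - j)) + j * 2 := by
          gcongr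
          · simp [natDegree_C]
          · simp
          · have : (X^2+1:Polynomial ℚ) = X^2 + C 1 := by norm_num
            rw [this, natDegree_X_pow_add_C]
      _ < 2 * g.natDegree := by omega
  · intro h
    simp at h

lemma irr_of_primroot (p : Polynomial ℤ) (hp : p.Monic) (m : ℕ) (hm : 2 < m) (ζ : ℂ)
    (hζ : IsPrimitiveRoot ζ m) (hroot : aeval (ζ + ζ⁻¹) p = 0)
    (hdeg : 2 * p.natDegree = Nat.totient m) :
    Irreducible (p.map (Int.castRingHom ℚ)) := by
  have hm0 : 0 < m := by omega
  have hζ0 : ζ ≠ 0 := hζ.ne_zero (by omega)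
  set q : Polynomial ℚ := p.map (Int.castRingHom ℚ) with hqdef
  have hq : q.Monic := hp.map _
  have hqd : q.natDegree = p.natDegree := hp.natDegree_map _
  have hqroot : aeval (ζ + ζ⁻¹) q = 0 := by
    rw [hqdef, ← algebraMap_int_eq, aeval_map_algebraMap]
    exact hroot
  have hint : IsIntegral ℚ (ζ + ζ⁻¹) := ⟨q, hq, by rwa [← aeval_def]⟩
  set g : Polynomial ℚ := minpoly ℚ (ζ + ζ⁻¹) with hgdef
  have hgmon : g.Monic := minpoly.monic hint
  have hgdvd : g ∣ q := minpoly.dvd ℚ _ hqroot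
  have hζint : IsIntegral ℚ ζ := (hζ.isIntegral hm0).tower_top
  have hcyc : minpoly ℚ ζ = cyclotomic m ℚ := (cyclotomic_eq_minpoly_rat hζ hm0).symm
  have hlift0 : liftP g ≠ 0 := fun h => by
    have := liftP_coeff_top g hgmon
    rw [h] at this
    simp at this
  have hliftroot : aeval ζ (liftP g) = 0 := by
    rw [aeval_liftP g ζ hζ0, minpoly.aeval, mul_zero]
  have htot : Nat.totient m ≤ 2 * g.natDegree := by
    have h1 : (minpoly ℚ ζ).natDegree ≤ (liftP g).natDegree :=
      natDegree_le_of_dvd (minpoly.dvd ℚ ζ hliftroot) hlift0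
    rw [hcyc, natDegree_cyclotomic] at h1
    exact h1.trans (natDegree_liftP_le g)
  have hle : q.natDegree ≤ g.natDegree := by omega
  have : g = q := eq_of_dvd_of_natDegree_le_of_leadingCoeff hgdvd hle
    (by rw [hgmon.leadingCoeff, hq.leadingCoeff])
  rw [← this]
  exact minpoly.irreducible hint

lemma dickson_natDegree_monic (k : ℕ) :
    (dickson 1 (1:ℤ) k).natDegree = k ∧ (k ≠ 0 → (dickson 1 (1:ℤ) k).Monic) := by
  induction k using Nat.twoStepInduction with
  | zero => refine ⟨?_, fun h => absurd rfl h⟩; norm_num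
  | one => exact ⟨natDegree_X, fun _ => monic_X⟩
  | more k ih1 ih2 =>
    obtain ⟨hd1, hm1⟩ := ih2
    obtain ⟨hd0, _⟩ := ih1
    have hm1' : (dickson 1 (1:ℤ) (k+1)).Monic := hm1 (by omega)
    have hXm : (X * dickson 1 (1:ℤ) (k+1)).Monic := monic_X.mul hm1'
    have hXd : (X * dickson 1 (1:ℤ) (k+1)).natDegree = k + 2 := by
      rw [monic_X.natDegree_mul hm1', natDegree_X, hd1]; omega
    have hlt : (-(C 1 * dickson 1 (1:ℤ) k)).degree < (X * dickson 1 (1:ℤ) (k+1)).degree := by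
      rw [degree_neg, C_1, one_mul, Polynomial.degree_eq_natDegree hXm.ne_zero, hXd]
      calc (dickson 1 (1:ℤ) k).degree ≤ ((dickson 1 (1:ℤ) k).natDegree : WithBot ℕ) :=
            degree_le_natDegree
        _ < ((k+2 : ℕ) : WithBot ℕ) := by rw [hd0]; exact_mod_cast (by omega : k < k + 2)
    have heq : dickson 1 (1:ℤ) (k+2)
        = X * dickson 1 (1:ℤ) (k+1) + -(C 1 * dickson 1 (1:ℤ) k) := by
      rw [dickson_add_two]; ring
    constructor
    · rw [heq, natDegree_add_eq_left_of_degree_lt hlt, hXd]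
    · intro _
      rw [heq]
      exact hXm.add_of_left hlt

lemma dickson_monic {k : ℕ} (h : k ≠ 0) : (dickson 1 (1:ℤ) k).Monic :=
  (dickson_natDegree_monic k).2 h

lemma dickson_natDegree (k : ℕ) : (dickson 1 (1:ℤ) k).natDegree = k :=
  (dickson_natDegree_monic k).1

lemma add_inv_eq_two {y : ℂ} (hy : y ≠ 0) (h : y + y⁻¹ = 2) : y = 1 := by
  have hin : y * y⁻¹ = 1 := mul_inv_cancel₀ hy
  have h2 : (y - 1)^2 = 0 := by linear_combination y * h - hin
  exact sub_eq_zero.mp ((pow_eq_zero_iff (two_ne_zero)).mp h2)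

lemma aeval_dickson_add_inv (z : ℂ) (hz : z ≠ 0) (N : ℕ) :
    aeval (z + z⁻¹) (dickson 1 (1:ℤ) N) = z^N + (z⁻¹)^N := by
  rw [aeval_dickson]
  exact dickson_one_one_eval_add_inv z z⁻¹ (mul_inv_cancel₀ hz) N

lemma phi_root (ℓ s i : ℕ) (hs : ℓ = 2*s+1) (hl : 2 ≤ ℓ) (hi : 1 ≤ i) (ζ : ℂ)
    (hζ : IsPrimitiveRoot ζ (ℓ^i)) :
    aeval (ζ + ζ⁻¹) ((uu s).comp (dickson 1 1 (ℓ^(i-1)))) = 0 := by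
  have hlpos : 0 < ℓ := by omega
  have hz0 : ζ ≠ 0 := hζ.ne_zero (by positivity)
  have hne2 : ζ + ζ⁻¹ - 2 ≠ 0 := by
    intro h
    have : ζ = 1 := add_inv_eq_two hz0 (by linear_combination h)
    exact hζ.ne_one (by
      have : ℓ^(i-1) < ℓ^i := Nat.pow_lt_pow_right (by omega) (by omega)
      have : 1 ≤ ℓ^(i-1) := Nat.one_le_pow _ _ hlpos
      omega) this
  have hmap : ∀ n : ℕ, ((ζ:ℂ)^(ℓ^n) + (ζ⁻¹)^(ℓ^n)) - 2
      = (ζ + ζ⁻¹ - 2) * ∏ j ∈ Finset.Icc 1 n,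
          (aeval (ζ + ζ⁻¹) ((uu s).comp (dickson 1 1 (ℓ^(j-1)))))^2 := by
    intro n
    have h := congrArg (fun p : Polynomial ℤ => aeval (ζ + ζ⁻¹) p)
      (prod_id ℓ s n hs (base_id s))
    simpa only [map_sub, map_mul, map_pow, map_prod, aeval_X, aeval_C,
      aeval_dickson_add_inv ζ hz0, algebraMap_int_eq, eq_intCast, Int.cast_ofNat, map_ofNat,
      Int.cast_two] using h
  have hzero : (∏ j ∈ Finset.Icc 1 i,
      (aeval (ζ + ζ⁻¹) ((uu s).comp (dickson 1 1 (ℓ^(j-1)))))^2) = 0 := by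
    have h := hmap i
    rw [hζ.pow_eq_one, inv_pow, hζ.pow_eq_one, inv_one] at h
    have h0 : (ζ + ζ⁻¹ - 2) * (∏ j ∈ Finset.Icc 1 i,
        (aeval (ζ + ζ⁻¹) ((uu s).comp (dickson 1 1 (ℓ^(j-1)))))^2) = 0 := by
      linear_combination -h
    rcases mul_eq_zero.mp h0 with h' | h'
    · exact absurd h' hne2
    · exact h'
  have hnonzero : ∀ j ∈ Finset.Icc 1 (i-1),
      (aeval (ζ + ζ⁻¹) ((uu s).comp (dickson 1 1 (ℓ^(j-1)))))^2 ≠ 0 := by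
    have hL : ζ^(ℓ^(i-1)) ≠ 1 := by
      intro h
      have hdvd : ℓ^i ∣ ℓ^(i-1) := (hζ.pow_eq_one_iff_dvd _).mp h
      have h1 : ℓ^i ≤ ℓ^(i-1) := Nat.le_of_dvd (Nat.one_le_pow _ _ hlpos) hdvd
      have h2 : ℓ^(i-1) < ℓ^i := Nat.pow_lt_pow_right (by omega) (by omega)
      omega
    have hLHS : ((ζ:ℂ)^(ℓ^(i-1)) + (ζ⁻¹)^(ℓ^(i-1))) - 2 ≠ 0 := by
      intro h
      apply hL
      apply add_inv_eq_two (pow_ne_zero _ hz0)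
      rw [← inv_pow]
      linear_combination h
    have h := hmap (i-1)
    intro j hj hj0
    apply hLHS
    rw [h, Finset.prod_eq_zero hj hj0, mul_zero]
  obtain ⟨j, hj, hj0⟩ := Finset.prod_eq_zero_iff.mp hzero
  have hji : j = i := by
    by_contra hne
    have hj' : j ∈ Finset.Icc 1 (i-1) := by
      rw [Finset.mem_Icc] at hj ⊢
      omega
    exact hnonzero j hj' hj0
  rw [hji] at hj0
  exact pow_eq_zero_iff (two_ne_zero) |>.mp hj0

lemma uu_monic_natDegree (k : ℕ) : (uu k).Monic ∧ (uu k).natDegree = k := by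
  induction k using Nat.twoStepInduction with
  | zero => exact ⟨monic_one, natDegree_one⟩
  | one => exact ⟨monic_X_add_C 1, by simpa using natDegree_X_add_C (1:ℤ)⟩
  | more k ih1 ih2 =>
    obtain ⟨hm1, hd1⟩ := ih2
    obtain ⟨hm0, hd0⟩ := ih1
    have hXm : (X * uu (k+1)).Monic := monic_X.mul hm1
    have hXd : (X * uu (k+1)).natDegree = k + 2 := by
      rw [monic_X.natDegree_mul hm1, natDegree_X, hd1]; omega
    have hlt : (-(uu k)).degree < (X * uu (k+1)).degree := by
      rw [degree_neg, Polynomial.degree_eq_natDegree hXm.ne_zero, hXd]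
      calc (uu k).degree ≤ ((uu k).natDegree : WithBot ℕ) := degree_le_natDegree
        _ < ((k+2 : ℕ) : WithBot ℕ) := by rw [hd0]; exact_mod_cast Nat.lt_add_of_pos_right (by norm_num)
    have heq : uu (k+2) = X * uu (k+1) + -(uu k) := by rw [uu_add_two]; ring
    constructor
    · rw [heq]; exact hXm.add_of_left hlt
    · rw [heq, natDegree_add_eq_left_of_degree_lt hlt, hXd]

theorem stmt1 (ℓ : ℕ) (hℓ : ℓ.Prime) (hodd : Odd ℓ) (n : ℕ) (hn : 1 ≤ n)
    (t : ℤ) (ht : t = 2 ∨ t = -2) :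
    ∃ φ : ℕ → Polynomial ℤ,
      (∀ i ∈ Finset.Icc 1 n,
        (φ i).Monic ∧
        Irreducible ((φ i).map (Int.castRingHom ℚ)) ∧
        (φ i).natDegree = (ℓ ^ i - ℓ ^ (i - 1)) / 2) ∧
      chebTIter ℓ n - C t = (X - C t) * ∏ i ∈ Finset.Icc 1 n, (φ i) ^ 2 := by
  obtain ⟨s, hs0⟩ := hodd
  have hs : ℓ = 2*s+1 := by omega
  have hoddl : Odd ℓ := ⟨s, hs0⟩
  have hl2 : 2 ≤ ℓ := hℓ.two_le
  have hl3 : 3 ≤ ℓ := by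
    rcases Nat.lt_or_ge ℓ 3 with h | h
    · interval_cases ℓ <;> omega
    · exact h
  have hlpos : 0 < ℓ := by omega
  set φ : ℕ → Polynomial ℤ := fun i => (uu s).comp (dickson 1 1 (ℓ^(i-1))) with hφ
  have humon : (uu s).Monic := (uu_monic_natDegree s).1
  have hudeg : (uu s).natDegree = s := (uu_monic_natDegree s).2
  have hLpos : ∀ i : ℕ, 0 < ℓ^(i-1) := fun i => Nat.one_le_pow _ _ hlpos
  have hφmon : ∀ i : ℕ, (φ i).Monic := by
    intro i
    exact humon.comp (dickson_monic (hLpos i).ne') (by rw [dickson_natDegree]; exact (hLpos i).ne')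
  have hφdeg : ∀ i : ℕ, (φ i).natDegree = s * ℓ^(i-1) := by
    intro i
    rw [hφ]
    simp only
    rw [natDegree_comp, hudeg, dickson_natDegree]
  have hpowi : ∀ i : ℕ, 1 ≤ i → ℓ^i = 2*(s*ℓ^(i-1)) + ℓ^(i-1) := by
    intro i hi
    have h1 : ℓ^i = ℓ * ℓ^(i-1) := by
      rw [← pow_succ']
      congr 1
      omega
    rw [h1, hs]
    ring
  have hdegclaim : ∀ i : ℕ, 1 ≤ i → (ℓ^i - ℓ^(i-1))/2 = s * ℓ^(i-1) := by
    intro i hi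
    have := hpowi i hi
    omega
  have htotient : ∀ i : ℕ, 1 ≤ i → Nat.totient (ℓ^i) = 2*(s*ℓ^(i-1)) := by
    intro i hi
    rw [Nat.totient_prime_pow hℓ (by omega : 0 < i)]
    have h2 : ℓ - 1 = 2*s := by omega
    rw [h2]
    ring
  have hm2 : ∀ i : ℕ, 1 ≤ i → 2 < ℓ^i := by
    intro i hi
    calc 2 < ℓ := by omega
      _ ≤ ℓ^i := Nat.le_self_pow (by omega) ℓ
  rcases ht with rfl | rfl
  · refine ⟨φ, ?_, ?_⟩
    · intro i hi
      rw [Finset.mem_Icc] at hi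
      have hi1 : 1 ≤ i := hi.1
      refine ⟨hφmon i, ?_, by rw [hφdeg i, hdegclaim i hi1]⟩
      have hζ := Complex.isPrimitiveRoot_exp (ℓ^i) (by positivity)
      exact irr_of_primroot (φ i) (hφmon i) (ℓ^i) (hm2 i hi1) _ hζ
        (phi_root ℓ s i hs hl2 hi1 _ hζ)
        (by rw [hφdeg i, htotient i hi1])
    · rw [chebTIter_eq, prod_id ℓ s n hs (base_id s)]
  · set ψ : ℕ → Polynomial ℤ := fun i => (-1)^((φ i).natDegree) * (φ i).comp (-X) with hψ
    have hψsq : ∀ i : ℕ, (ψ i)^2 = ((φ i).comp (-X))^2 := by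
      intro i
      rw [hψ]
      simp only
      rw [mul_pow, ← pow_mul, mul_comm ((φ i).natDegree) 2, pow_mul]
      norm_num
    refine ⟨ψ, ?_, ?_⟩
    · intro i hi
      rw [Finset.mem_Icc] at hi
      have hi1 : 1 ≤ i := hi.1
      have hψmon : (ψ i).Monic := (hφmon i).neg_one_pow_natDegree_mul_comp_neg_X
      have hψdeg : (ψ i).natDegree = (φ i).natDegree := by
        rw [hψ]
        simp only
        rcases Nat.even_or_odd ((φ i).natDegree) with he | ho
        · rw [he.neg_one_pow, one_mul, natDegree_comp]
          simp
        · rw [ho.neg_one_pow, neg_one_mul, natDegree_neg, natDegree_comp]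
          simp
      refine ⟨hψmon, ?_, by rw [hψdeg, hφdeg i, hdegclaim i hi1]⟩
      have h2l : (2*ℓ^i : ℕ) ≠ 0 := by positivity
      obtain ⟨ζ, hζ⟩ : ∃ ζ : ℂ, IsPrimitiveRoot ζ (2*ℓ^i) :=
        ⟨_, Complex.isPrimitiveRoot_exp _ h2l⟩
      have hoddli : Odd (ℓ^i) := hoddl.pow
      have hζhalf : ζ^(ℓ^i) = -1 := by
        have hsq : (ζ^(ℓ^i))^2 = 1 := by
          rw [← pow_mul, mul_comm]
          exact hζ.pow_eq_one
        have hne1 : ζ^(ℓ^i) ≠ 1 := hζ.pow_ne_one_of_pos_of_lt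
          (by positivity) (by have := hm2 i hi1; omega)
        have hfac : (ζ^(ℓ^i) - 1) * (ζ^(ℓ^i) + 1) = 0 := by linear_combination hsq
        rcases mul_eq_zero.mp hfac with h | h
        · exact absurd (by linear_combination h) hne1
        · linear_combination h
      have hζ' : IsPrimitiveRoot (-ζ) (ℓ^i) := by
        constructor
        · rw [neg_pow, hoddli.neg_one_pow, hζhalf]
          norm_num
        · intro l hl
          have hsq : (ζ^2)^l = 1 := by
            have h1 : ((-ζ)^l)^2 = 1 := by rw [hl]; exact one_pow 2
            calc (ζ^2)^l = ((-ζ)^2)^l := by rw [neg_sq]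
              _ = ((-ζ)^l)^2 := by rw [← pow_mul, mul_comm, pow_mul]
              _ = 1 := h1
          have hdvd : 2*ℓ^i ∣ 2*l := hζ.dvd_of_pow_eq_one _ (by rwa [pow_mul])
          exact Nat.dvd_of_mul_dvd_mul_left (by norm_num) hdvd
      have hroot : aeval (ζ + ζ⁻¹) (ψ i) = 0 := by
        rw [hψ]
        simp only [map_mul, map_pow, map_neg, map_one, aeval_comp, aeval_X]
        rw [show -(ζ + ζ⁻¹) = (-ζ) + (-ζ)⁻¹ by rw [inv_neg]; ring]
        rw [phi_root ℓ s i hs hl2 hi1 _ hζ', mul_zero]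
      apply irr_of_primroot (ψ i) hψmon (2*ℓ^i) (by have := hm2 i hi1; omega) ζ hζ hroot
      rw [hψdeg, hφdeg i, Nat.totient_mul (Nat.coprime_two_left.mpr hoddli),
        Nat.totient_two, one_mul, htotient i hi1]
    · have hneg := neg_id ℓ s n hoddl.pow (prod_id ℓ s n hs (base_id s))
      calc chebTIter ℓ n - C (-2 : ℤ)
          = dickson 1 1 (ℓ^n) + C 2 := by rw [chebTIter_eq, map_neg, sub_neg_eq_add]
        _ = (X + C 2) * ∏ i ∈ Finset.Icc 1 n, (((uu s).comp (dickson 1 1 (ℓ^(i-1)))).comp (-X))^2 :=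
            hneg
        _ = (X - C (-2 : ℤ)) * ∏ i ∈ Finset.Icc 1 n, (ψ i)^2 := by
            rw [map_neg, sub_neg_eq_add]
            exact congrArg _ (Finset.prod_congr rfl fun i _ => (hψsq i).symm)
end

section
/- D(Φ) = ℓ^{nℓ^n}·(4 − t²)^{(ℓ^n−1)/2}; that is, the discriminant of the polynomial Φ(x) = T_ℓ^n(x) − t (equivalently, the discriminant of the ℚ-basis 1, θ, …, θ^{ℓ^n−1} of K) equals ℓ^{nℓ^n}·(4 − t²)^{(ℓ^n−1)/2}. -/
/-!
Write `D = ℓ^n`, so that `T_ℓ^n = T_D` and `Φ = T_D - t`. Up to the sign `(-1)^(D(D-1)/2)`, the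
discriminant is `∏ᵢ Φ'(θᵢ)`, and `Φ' = D · S_{D-1}`, where
`S_{D-1}(z + z⁻¹) = (z^D - z^{-D})/(z - z⁻¹)` is monic with the `D - 1` simple roots
`bₖ = 2 cos(kπ/D)`, at which `T_D(bₖ) = 2(-1)^k`.
Swapping the two products and using that `D` is odd,
`∏ᵢ S_{D-1}(θᵢ) = ∏ₖ ∏ᵢ (θᵢ - bₖ) = ∏ₖ (t - 2(-1)^k) = (t² - 4)^((D-1)/2)`.
-/

open Polynomial

namespace Polynomial.Chebyshev
variable (R : Type*) [CommRing R]

theorem C_derivative_eq_S (n : ℤ) : derivative (C R n) = n * S R (n - 1) := by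
  induction n using Polynomial.Chebyshev.induct with
  | zero => simp
  | one => simp
  | add_two n ih1 ih2 =>
    have h₁ := congr_arg derivative (C_add_two R n)
    have h₂ := S_sub_one R n
    have h₃ := C_eq_S_sub_X_mul_S R (n + 1)
    simp only [derivative_sub, derivative_mul, derivative_X] at h₁
    linear_combination (norm := (push_cast; ring_nf))
      h₁ - ih2 + (X : R[X]) * ih1 + h₃ - n * h₂
  | neg_add_one n ih1 ih2 =>
    have h₁ := congr_arg derivative (C_sub_one R (-n))
    have h₂ := S_sub_two R (-n)
    have h₃ := C_eq_S_sub_X_mul_S R (-n)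
    simp only [derivative_sub, derivative_mul, derivative_X] at h₁
    linear_combination (norm := (push_cast; ring_nf))
      -ih2 + (X : R[X]) * ih1 + h₁ + h₃ + (n + 1) * h₂

variable [NeZero (2 : R)]

theorem natDegree_two_mul_X : (2 * X : R[X]).natDegree = 1 := by
  rw [← C_ofNat, natDegree_C_mul_X _ two_ne_zero]

variable [IsDomain R]

theorem natDegree_S_natCast (n : ℕ) : (S R n).natDegree = n := by
  have h := congrArg natDegree (S_comp_two_mul_X R n)
  rwa [natDegree_comp, natDegree_U_natCast, natDegree_two_mul_X, mul_one] at h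

theorem monic_S_natCast (n : ℕ) : (S R n).Monic := by
  have h := congrArg leadingCoeff (S_comp_two_mul_X R n)
  rw [leadingCoeff_comp (by simp [natDegree_two_mul_X]), leadingCoeff_U_natCast,
    natDegree_S_natCast, ← C_ofNat, leadingCoeff_C_mul_X] at h
  exact mul_right_cancel₀ (pow_ne_zero n two_ne_zero) (h.trans (one_mul _).symm)

open Real in
theorem S_real_eq_prod (n : ℕ) :
    S ℝ n = ∏ k ∈ Finset.range n, (X - Polynomial.C (2 * cos ((k + 1) * π / (n + 1)))) := by
  set b : ℕ → ℝ := fun k => 2 * cos ((k + 1) * π / (n + 1))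
  have hinj : Set.InjOn b (Finset.range n) := fun k hk l hl h =>
    (Finset.range n).nodup_map_iff_injOn.mp (roots_U_real_nodup n) hk hl
      (mul_left_cancel₀ two_ne_zero h)
  have hcard : ((Finset.range n).image b).card = n := by
    rw [Finset.card_image_of_injOn hinj, Finset.card_range]
  have hroots : (S ℝ n).roots = ((Finset.range n).image b).val := by
    refine roots_eq_of_degree_eq_card (fun x hx ↦ ?_) ?_
    · obtain ⟨k, hk, rfl⟩ := Finset.mem_image.mp hx
      rw [Finset.mem_range] at hk
      suffices (S ℝ n).eval (b k) * sin ((k + 1) * π / (n + 1)) = 0 by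
        refine (mul_eq_zero_iff_right
          (sin_pos_of_pos_of_lt_pi (by positivity) ?_).ne').mp this
        field_simp
        norm_cast
        grind
      rw [S_two_mul_real_cos, sin_eq_zero_iff]
      use k + 1
      field_simp
      norm_cast
      ring
    · rw [hcard, degree_eq_natDegree (monic_S_natCast ℝ n).ne_zero, natDegree_S_natCast]
  rw [← Finset.prod_image (f := fun x => X - Polynomial.C x) hinj, Finset.prod_eq_multiset_prod,
    ← hroots, prod_multiset_X_sub_C_of_monic_of_roots_card_eq (monic_S_natCast ℝ n)]
  rw [hroots, natDegree_S_natCast, Finset.card_val, hcard]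

end Polynomial.Chebyshev

open Finset

theorem Fin.sum_card_Ioi (N : ℕ) : ∑ i : Fin N, #(Ioi i) = N * (N - 1) / 2 := by
  simp_rw [Fin.card_Ioi]
  rw [Fin.sum_univ_eq_sum_range (fun i => N - 1 - i), sum_range_reflect (fun i => i),
    sum_range_id]

theorem Lagrange.prod_Ioi_sub_sq_eq_neg_one_pow_mul_prod_eval_derivative_nodal {R : Type*}
    [CommRing R] {N : ℕ} (v : Fin N → R) :
    ∏ i, ∏ j ∈ Ioi i, (v j - v i) ^ 2 =
      (-1) ^ (N * (N - 1) / 2) * ∏ i, (derivative (Lagrange.nodal univ v)).eval (v i) := by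
  have hoff : ∏ i, (derivative (Lagrange.nodal univ v)).eval (v i) =
      ∏ i, ∏ j ∈ Ioi i, -(v j - v i) ^ 2 := calc
    _ = ∏ i, ∏ j ∈ univ.erase i, (v i - v j) := by
      simp_rw [Lagrange.eval_nodal_derivative_eval_node_eq (mem_univ _), Lagrange.eval_nodal]
    _ = ∏ i, ∏ j ∈ Ioi i, (v i - v j) * (v j - v i) := by
      simp_rw [← compl_singleton]
      exact (prod_prod_Ioi_mul_eq_prod_prod_off_diag fun j i => v i - v j).symm
    _ = _ := prod_congr rfl fun i _ => prod_congr rfl fun j _ => by ring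
  rw [hoff]
  simp_rw [prod_neg]
  rw [prod_mul_distrib, prod_pow_eq_pow_sum, Fin.sum_card_Ioi, ← mul_assoc, ← pow_add, ← two_mul,
    pow_mul]
  simp

theorem Lagrange.prod_eval_nodal_eq_neg_one_pow_mul {R ι κ : Type*} [CommRing R]
    (s : Finset ι) (t : Finset κ) (v : ι → R) (w : κ → R) :
    ∏ i ∈ s, (Lagrange.nodal t w).eval (v i) =
      (-1) ^ (#s * #t) * ∏ k ∈ t, (Lagrange.nodal s v).eval (w k) := by
  simp_rw [Lagrange.eval_nodal]
  rw [prod_comm, pow_mul, ← prod_const, ← prod_mul_distrib]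
  refine prod_congr rfl fun k _ => ?_
  rw [← prod_neg]
  simp

theorem prod_range_two_mul_neg_one_pow_sub {R : Type*} [CommRing R] (t : R) (m : ℕ) :
    ∏ k ∈ range (2 * m), (2 * (-1) ^ (k + 1) - t) = (t ^ 2 - 4) ^ m := by
  induction m with
  | zero => simp
  | succ m ih =>
    rw [mul_add, prod_range_succ, prod_range_succ, ih, pow_succ _ m]
    simp only [pow_succ, pow_zero, one_mul, pow_mul, mul_neg, mul_one, neg_neg, one_pow]
    ring

open Real in
theorem prod_Ioi_sub_sq_of_chebyshev_C_sub_C_eq_nodal {D : ℕ} (hD : Odd D) (t : ℂ)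
    (θ : Fin D → ℂ) (hθ : Chebyshev.C ℂ D - C t = Lagrange.nodal univ θ) :
    ∏ i, ∏ j ∈ Ioi i, (θ j - θ i) ^ 2 = (D : ℂ) ^ D * (4 - t ^ 2) ^ ((D - 1) / 2) := by
  obtain ⟨m, rfl⟩ := hD
  set b : ℕ → ℂ := fun k => ((2 * cos ((k + 1) * π / ((2 * m : ℕ) + 1)) : ℝ) : ℂ)
  have hS : Chebyshev.S ℂ (2 * m : ℕ) = Lagrange.nodal (range (2 * m)) b := by
    rw [← Chebyshev.map_S (algebraMap ℝ ℂ), Chebyshev.S_real_eq_prod, Polynomial.map_prod]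
    simp [b, Lagrange.nodal]
  have hderiv : derivative (Lagrange.nodal univ θ) =
      C ((2 * m + 1 : ℕ) : ℂ) * Lagrange.nodal (range (2 * m)) b := by
    rw [← hθ, derivative_sub, derivative_C, sub_zero, Chebyshev.C_derivative_eq_S,
      show ((2 * m + 1 : ℕ) : ℤ) - 1 = (2 * m : ℕ) by push_cast; ring, hS, Int.cast_natCast,
      C_eq_natCast]
  have hT (k : ℕ) : (Chebyshev.C ℂ (2 * m + 1 : ℕ)).eval (b k) = 2 * (-1) ^ (k + 1) := by
    have harg : (((2 * m + 1 : ℕ) : ℤ) : ℝ) * ((k + 1) * π / ((2 * m : ℕ) + 1)) =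
        (k + 1 : ℕ) * π := by
      push_cast
      field_simp
    rw [← Chebyshev.complex_ofReal_eval_C, Chebyshev.C_two_mul_real_cos, harg, cos_nat_mul_pi]
    push_cast
    rfl
  have hsign : (-1 : ℂ) ^ ((2 * m + 1) * (2 * m + 1 - 1) / 2) = (-1) ^ m := by
    rw [Nat.add_sub_cancel, mul_left_comm, Nat.mul_div_cancel_left _ two_pos, pow_mul,
      (odd_two_mul_add_one m).neg_one_pow]
  have hsign_swap : (-1 : ℂ) ^ ((2 * m + 1) * (2 * m)) = 1 :=
    ((even_two_mul m).mul_left _).neg_one_pow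
  calc
    _ = (-1) ^ m * ∏ i, (derivative (Lagrange.nodal univ θ)).eval (θ i) := by
      rw [Lagrange.prod_Ioi_sub_sq_eq_neg_one_pow_mul_prod_eval_derivative_nodal, hsign]
    _ = (-1) ^ m * (((2 * m + 1 : ℕ) : ℂ) ^ (2 * m + 1) *
          ∏ k ∈ range (2 * m), (Lagrange.nodal univ θ).eval (b k)) := by
      simp_rw [hderiv, eval_mul, eval_C]
      rw [prod_mul_distrib, prod_const, card_univ, Fintype.card_fin,
        Lagrange.prod_eval_nodal_eq_neg_one_pow_mul, card_univ, Fintype.card_fin, card_range,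
        hsign_swap, one_mul]
    _ = (-1) ^ m * (((2 * m + 1 : ℕ) : ℂ) ^ (2 * m + 1) * (t ^ 2 - 4) ^ m) := by
      simp_rw [← hθ, eval_sub, hT, eval_C, prod_range_two_mul_neg_one_pow_sub]
    _ = _ := by
      rw [Nat.add_sub_cancel, Nat.mul_div_cancel_left _ two_pos, mul_left_comm, ← mul_pow]
      ring

theorem chebTIter_eq_chebyshev_C (ℓ n : ℕ) : chebTIter ℓ n = Chebyshev.C ℤ (ℓ ^ n : ℕ) := by
  induction n with
  | zero => simp [chebTIter]
  | succ n ih =>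
    rw [chebTIter, Function.iterate_succ_apply', ← chebTIter, ih, chebT,
      dickson_one_one_eq_chebyshev_C, ← Chebyshev.C_mul, pow_succ', Nat.cast_mul]

theorem stmt5_general (ℓ : ℕ) (hodd : Odd ℓ) (n : ℕ) (t : ℤ)
    (θ : Fin (ℓ ^ n) → ℂ)
    (hroots : (chebTIter ℓ n - C t).map (Int.castRingHom ℂ) =
      ∏ i, (X - C (θ i))) :
    (∏ i, ∏ j ∈ Finset.univ.filter (fun j => i < j), (θ j - θ i) ^ 2) =
      (ℓ : ℂ) ^ (n * ℓ ^ n) * (4 - (t : ℂ) ^ 2) ^ ((ℓ ^ n - 1) / 2) := by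
  have hΦ : Chebyshev.C ℂ (ℓ ^ n : ℕ) - C (t : ℂ) = Lagrange.nodal Finset.univ θ := by
    rw [← Chebyshev.map_C (Int.castRingHom ℂ), ← chebTIter_eq_chebyshev_C,
      ← eq_intCast (Int.castRingHom ℂ) t, ← Polynomial.map_C, ← Polynomial.map_sub, hroots]
    rfl
  simp_rw [Finset.filter_lt_eq_Ioi]
  rw [prod_Ioi_sub_sq_of_chebyshev_C_sub_C_eq_nodal hodd.pow (t : ℂ) θ hΦ, Nat.cast_pow,
    ← pow_mul]

theorem stmt5 (ℓ : ℕ) (hℓ : ℓ.Prime) (hodd : Odd ℓ) (n : ℕ) (hn : 1 ≤ n) (t : ℤ)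
    (hirr : Irreducible ((chebTIter ℓ n - C t).map (Int.castRingHom ℚ)))
    (θ : Fin (ℓ ^ n) → ℂ)
    (hroots : (chebTIter ℓ n - C t).map (Int.castRingHom ℂ) =
      ∏ i, (X - C (θ i))) :
    (∏ i, ∏ j ∈ Finset.univ.filter (fun j => i < j), (θ j - θ i) ^ 2) =
      (ℓ : ℂ) ^ (n * ℓ ^ n) * (4 - (t : ℂ) ^ 2) ^ ((ℓ ^ n - 1) / 2) :=
  stmt5_general ℓ hodd n t θ hroots
end

section
/- Let ℓ be an odd prime. For any integers a and b, T_ℓ(a) ≡ T_ℓ(b) (mod ℓ²) if and only if a ≡ b (mod ℓ). -/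
open Polynomial

theorem stmt7 (ℓ : ℕ) (hℓ : ℓ.Prime) (hodd : Odd ℓ) (a b : ℤ) :
    ((ℓ : ℤ) ^ 2 ∣ (chebT ℓ).eval a - (chebT ℓ).eval b) ↔ ((ℓ : ℤ) ∣ a - b) := by
  haveI : Fact ℓ.Prime := ⟨hℓ⟩
  obtain ⟨g, hg⟩ : (C (ℓ : ℤ)) ∣ chebT ℓ - X ^ ℓ := by
    rw [Polynomial.C_dvd_iff_dvd_coeff]
    intro n
    have hmap : (chebT ℓ - X ^ ℓ).map (Int.castRingHom (ZMod ℓ)) = 0 := by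
      simp [chebT, Polynomial.map_dickson, Polynomial.dickson_one_one_charP]
    rw [← ZMod.intCast_zmod_eq_zero_iff_dvd, ← eq_intCast (Int.castRingHom (ZMod ℓ)),
      ← Polynomial.coeff_map, hmap, Polynomial.coeff_zero]
  have heval : ∀ x : ℤ, (chebT ℓ).eval x = x ^ ℓ + ℓ * g.eval x := by
    intro x
    have h3 := congrArg (Polynomial.eval x) hg
    simp only [eval_sub, eval_pow, eval_X, eval_mul, eval_C] at h3
    linarith
  have key : (chebT ℓ).eval a - (chebT ℓ).eval b
      = (a ^ ℓ - b ^ ℓ) + ℓ * (g.eval a - g.eval b) := by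
    rw [heval a, heval b]; ring
  constructor
  · intro h
    have hdvd : (ℓ : ℤ) ∣ a ^ ℓ - b ^ ℓ := by
      have h1 : (ℓ : ℤ) ∣ (chebT ℓ).eval a - (chebT ℓ).eval b :=
        dvd_trans (dvd_pow_self _ two_ne_zero) h
      rw [key] at h1
      exact (dvd_add_left (dvd_mul_right _ _)).mp h1
    have : ((a : ZMod ℓ)) = b := by
      have h2 : ((a : ZMod ℓ)) ^ ℓ = (b : ZMod ℓ) ^ ℓ := by
        have := (ZMod.intCast_zmod_eq_zero_iff_dvd _ _).mpr hdvd
        push_cast at this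
        linear_combination this
      rwa [ZMod.pow_card, ZMod.pow_card] at h2
    exact (ZMod.intCast_zmod_eq_zero_iff_dvd (a - b) ℓ).mp (by push_cast; rw [sub_eq_zero]; exact this)
  · intro h
    rw [key]
    have h1 : (ℓ : ℤ) ^ 2 ∣ a ^ ℓ - b ^ ℓ := by
      have := dvd_sub_pow_of_dvd_sub (p := ℓ) (a := a) (b := b) (by exact_mod_cast h) 1
      simpa [pow_one] using this
    have h2 : (ℓ : ℤ) ^ 2 ∣ (ℓ : ℤ) * (g.eval a - g.eval b) := by
      have : (a - b) ∣ g.eval a - g.eval b := Polynomial.sub_dvd_eval_sub a b g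
      have h3 : (ℓ : ℤ) ∣ g.eval a - g.eval b := dvd_trans h this
      rw [sq]
      exact mul_dvd_mul_left _ h3
    exact dvd_add h1 h2
end

section
/- Let ℓ be an odd prime, n ≥ 1 an integer, and t ∈ ℤ. Then T_ℓ^n(t) ≡ t (mod ℓ²) if and only if there exists an integer a such that t ≡ T_ℓ(a) (mod ℓ²). -/
open Polynomial

lemma chebT_map_zmod (ℓ : ℕ) (hℓ : ℓ.Prime) :
    (chebT ℓ).map (Int.castRingHom (ZMod ℓ)) = X ^ ℓ := by
  haveI : Fact ℓ.Prime := ⟨hℓ⟩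
  rw [chebT, Polynomial.map_dickson]
  simpa using Polynomial.dickson_one_one_charP (R := ZMod ℓ) ℓ

lemma chebT_coeff_sub (ℓ : ℕ) (hℓ : ℓ.Prime) (i : ℕ) :
    (ℓ : ℤ) ∣ (chebT ℓ - X ^ ℓ).coeff i := by
  have h : ((chebT ℓ - X ^ ℓ).map (Int.castRingHom (ZMod ℓ))) = 0 := by
    rw [Polynomial.map_sub, chebT_map_zmod ℓ hℓ, Polynomial.map_pow, map_X, sub_self]
  have := congrArg (fun p => Polynomial.coeff p i) h
  simp only [Polynomial.coeff_map, Polynomial.coeff_zero, eq_intCast] at this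
  exact (ZMod.intCast_zmod_eq_zero_iff_dvd _ _).mp this

lemma lemA (ℓ : ℕ) (hℓ : ℓ.Prime) (u v : ℤ) (h : (ℓ : ℤ) ∣ u - v) :
    (ℓ : ℤ) ^ 2 ∣ (chebT ℓ).eval u - (chebT ℓ).eval v := by
  set Q : Polynomial ℤ := chebT ℓ - X ^ ℓ with hQ
  have hdecomp : (chebT ℓ).eval u - (chebT ℓ).eval v
      = (Q.eval u - Q.eval v) + (u ^ ℓ - v ^ ℓ) := by
    simp [hQ]; ring
  rw [hdecomp]
  refine dvd_add ?_ ?_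
  · rw [Polynomial.eval_eq_sum_range, Polynomial.eval_eq_sum_range, ← Finset.sum_sub_distrib]
    refine Finset.dvd_sum fun i _ => ?_
    rw [← mul_sub, sq]
    exact mul_dvd_mul (chebT_coeff_sub ℓ hℓ i)
      (dvd_trans h (sub_dvd_pow_sub_pow u v i))
  · simpa using dvd_sub_pow_of_dvd_sub h 1

lemma lemB (ℓ : ℕ) (hℓ : ℓ.Prime) (t : ℤ) :
    (ℓ : ℤ) ∣ (chebT ℓ).eval t - t := by
  haveI : Fact ℓ.Prime := ⟨hℓ⟩
  rw [← ZMod.intCast_zmod_eq_zero_iff_dvd]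
  push_cast
  have : (((chebT ℓ).eval t : ℤ) : ZMod ℓ)
      = ((chebT ℓ).map (Int.castRingHom (ZMod ℓ))).eval ((t : ℤ) : ZMod ℓ) := by
    rw [Polynomial.eval_intCast_map]; simp
  rw [this, chebT_map_zmod ℓ hℓ]
  simp [ZMod.pow_card]

lemma iter_eval (ℓ : ℕ) : ∀ (m : ℕ) (t : ℤ),
    (chebTIter ℓ m).eval t = (fun x => (chebT ℓ).eval x)^[m] t := by
  intro m
  induction m with
  | zero => intro t; simp [chebTIter]
  | succ m ih =>
      intro t
      rw [chebTIter, Function.iterate_succ_apply', Function.iterate_succ_apply',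
        Polynomial.eval_comp, ← chebTIter, ih]

theorem stmt9 (ℓ : ℕ) (hℓ : ℓ.Prime) (hodd : Odd ℓ) (n : ℕ) (hn : 1 ≤ n) (t : ℤ) :
    ((ℓ : ℤ) ^ 2 ∣ (chebTIter ℓ n).eval t - t) ↔
      ∃ a : ℤ, (ℓ : ℤ) ^ 2 ∣ t - (chebT ℓ).eval a := by
  set f : ℤ → ℤ := fun x => (chebT ℓ).eval x with hf
  have hBiter : ∀ (m : ℕ) (x : ℤ), (ℓ : ℤ) ∣ f^[m] x - x := by
    intro m x
    induction m with
    | zero => simp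
    | succ m ih =>
        rw [Function.iterate_succ_apply']
        have h1 := lemB ℓ hℓ (f^[m] x)
        have := dvd_add h1 ih
        simpa using this
  have hcong : ∀ (m : ℕ) (u v : ℤ), (ℓ : ℤ) ^ 2 ∣ u - v →
      (ℓ : ℤ) ^ 2 ∣ f^[m] u - f^[m] v := by
    intro m
    induction m with
    | zero => intro u v h; simpa using h
    | succ m ih =>
        intro u v h
        rw [Function.iterate_succ_apply', Function.iterate_succ_apply']
        exact dvd_trans (dvd_trans (ih u v h) (Polynomial.sub_dvd_eval_sub _ _ _)) dvd_rfl
  constructor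
  · intro h
    refine ⟨f^[n - 1] t, ?_⟩
    rw [iter_eval] at h
    have hne : f^[n] t = (chebT ℓ).eval (f^[n - 1] t) := by
      conv_lhs => rw [show n = (n - 1) + 1 by omega, Function.iterate_succ_apply']
    rw [← hne]
    simpa [neg_sub] using dvd_neg.mpr h
  · rintro ⟨a, ha⟩
    rw [iter_eval]
    have h1 : (ℓ : ℤ) ^ 2 ∣ f^[n] t - f^[n] (f a) := by
      refine hcong n t (f a) ?_
      simpa [hf] using ha
    have h2 : (ℓ : ℤ) ^ 2 ∣ f (f^[n] a) - f a :=
      lemA ℓ hℓ _ _ (hBiter n a)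
    have h3 : f^[n] (f a) = f (f^[n] a) := by
      rw [← Function.iterate_succ_apply, Function.iterate_succ_apply']
    have h4 : (ℓ : ℤ) ^ 2 ∣ f a - t := by simpa [neg_sub] using dvd_neg.mpr ha
    have : f^[n] t - t = (f^[n] t - f^[n] (f a)) + (f (f^[n] a) - f a) + (f a - t) := by
      rw [h3]; ring
    rw [this]
    exact dvd_add (dvd_add h1 h2) h4
end

section
/- Let ℓ be an odd prime and n ≥ 1, and write T_ℓ^n(x) = Σ_i c_i x^i, so that c_i is the coefficient of x^i in T_ℓ^n. For all integers m and i with 0 ≤ m ≤ n and 0 < i ≤ ℓ^m, one has ν_ℓ(c_i) ≥ n − m, with equality only if i = ℓ^m; moreover ν_ℓ(c_{ℓ^m}) = n − m exactly. -/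
open Polynomial

namespace Polynomial

variable {R : Type*}

lemma dvd_coeff_mul_of_forall_le [CommSemiring R] {a : R} {P : R[X]} (Q : R[X]) {i : ℕ}
    (h : ∀ j ≤ i, a ∣ P.coeff j) : a ∣ (P * Q).coeff i := by
  rw [coeff_mul]
  exact Finset.dvd_sum fun x hx =>
    (h x.1 (Finset.HasAntidiagonal.antidiagonal.fst_le hx)).mul_right _

lemma mul_dvd_coeff_mul_of_coeff_zero [CommSemiring R] {a b : R} {P Q : R[X]} {N i : ℕ}
    (hP₀ : P.coeff 0 = 0) (hQ₀ : Q.coeff 0 = 0)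
    (hP : ∀ j < N, a ∣ P.coeff j) (hQ : ∀ j < N, b ∣ Q.coeff j) (hi : i ≤ N) :
    a * b ∣ (P * Q).coeff i := by
  rw [coeff_mul]
  refine Finset.dvd_sum fun ⟨j, k⟩ hjk => ?_
  rw [Finset.HasAntidiagonal.mem_antidiagonal] at hjk
  rcases Nat.eq_zero_or_pos j with rfl | hj
  · simp [hP₀]
  rcases Nat.eq_zero_or_pos k with rfl | hk
  · simp [hQ₀]
  exact mul_dvd_mul (hP j (by omega)) (hQ k (by omega))

/-- Among the coefficients of index `≤ N`, the one of index `N` has `p`-adic valuation `k` and all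
others have valuation `> k`. -/
def HasStrictMinValuationAt [Semiring R] (p : R) (F : R[X]) (N k : ℕ) : Prop :=
  (∀ j < N, p ^ (k + 1) ∣ F.coeff j) ∧ p ^ k ∣ F.coeff N ∧ ¬ p ^ (k + 1) ∣ F.coeff N

lemma HasStrictMinValuationAt.mul_add_sq_mul [CommRing R] [IsDomain R] {p u : R}
    (hp : Prime p) (hu : ¬ p ∣ u) {F : R[X]} {N k : ℕ} (hF₀ : F.coeff 0 = 0)
    (hF : HasStrictMinValuationAt p F N k) (Q : R[X]) :
    HasStrictMinValuationAt p (C (p * u) * F + F ^ 2 * Q) N (k + 1) := by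
  obtain ⟨hlow, hdvd, hndvd⟩ := hF
  have hsq : ∀ i ≤ N, p ^ (k + 2) ∣ (F ^ 2 * Q).coeff i := fun i hi => by
    refine (pow_dvd_pow p (by omega : k + 2 ≤ (k + 1) + (k + 1))).trans ?_
    rw [pow_add, sq]
    exact dvd_coeff_mul_of_forall_le Q fun j hj =>
      mul_dvd_coeff_mul_of_coeff_zero hF₀ hF₀ hlow hlow (hj.trans hi)
  have hcoeff : ∀ i, (C (p * u) * F + F ^ 2 * Q).coeff i
      = p * (u * F.coeff i) + (F ^ 2 * Q).coeff i := fun i => by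
    rw [coeff_add, coeff_C_mul, mul_assoc]
  refine ⟨fun j hj => ?_, ?_, fun h => ?_⟩
  · rw [hcoeff]
    refine dvd_add ?_ (hsq j hj.le)
    rw [pow_succ']
    exact mul_dvd_mul_left p ((hlow j hj).mul_left u)
  · rw [hcoeff]
    refine dvd_add ?_ ((pow_dvd_pow p (by omega)).trans (hsq N le_rfl))
    rw [pow_succ']
    exact mul_dvd_mul_left p (hdvd.mul_left u)
  · have hlin : p ^ (k + 2) ∣ p * (u * F.coeff N) := by
      have := dvd_sub h (hsq N le_rfl)
      rwa [hcoeff, add_sub_cancel_right] at this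
    rw [pow_succ', mul_dvd_mul_iff_left hp.ne_zero] at hlin
    exact hndvd (hp.pow_dvd_of_dvd_mul_left _ hu hlin)

lemma comp_eq_C_mul_add_sq_mul_of_coeff_zero [CommRing R] {P : R[X]} (hP₀ : P.coeff 0 = 0)
    (F : R[X]) : P.comp F = C (P.coeff 1) * F + F ^ 2 * P.divX.divX.comp F := by
  have hP : P = C (P.coeff 1) * X + X ^ 2 * P.divX.divX := by
    conv_lhs => rw [← X_mul_divX_add P, ← X_mul_divX_add P.divX]
    rw [hP₀, coeff_divX, C_0, add_zero]
    ring
  conv_lhs => rw [hP]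
  simp only [add_comp, mul_comp, C_comp, X_comp, pow_comp]

lemma HasStrictMinValuationAt.of_map_eq_X_pow {p : ℕ} [Fact p.Prime] {P : ℤ[X]} {N : ℕ}
    (h : P.map (Int.castRingHom (ZMod p)) = X ^ N) : HasStrictMinValuationAt (p : ℤ) P N 0 := by
  have hcoeff (j : ℕ) : ((P.coeff j : ℤ) : ZMod p) = if j = N then 1 else 0 := by
    simpa [coeff_X_pow] using congrArg (coeff · j) h
  refine ⟨fun j hj => ?_, by simp, fun hdvd => ?_⟩
  · rw [zero_add, pow_one, ← ZMod.intCast_zmod_eq_zero_iff_dvd, hcoeff, if_neg hj.ne]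
  · rw [zero_add, pow_one, ← ZMod.intCast_zmod_eq_zero_iff_dvd, hcoeff, if_pos rfl] at hdvd
    exact one_ne_zero hdvd

end Polynomial

lemma chebT_comp_two_mul_X (d : ℕ) : (chebT d).comp (C 2 * X) = 2 * Chebyshev.T ℤ d := by
  rw [chebT, dickson_one_one_eq_chebyshev_C, ← Chebyshev.C_comp_two_mul_X]
  rfl

lemma chebT_coeff_zero_of_odd {d : ℕ} (hd : Odd d) : (chebT d).coeff 0 = 0 := by
  have h := congrArg (coeff · 0) (chebT_comp_two_mul_X d)
  simp only [comp_C_mul_X_coeff, pow_zero, mul_one] at h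
  rw [h, coeff_ofNat_mul, coeff_zero_eq_eval_zero,
    Chebyshev.T_eval_zero_of_odd ℤ (by exact_mod_cast hd), mul_zero]

/-- Via `chebT d (2x) = 2 T_d(x)` and `T_d' = d U_{d-1}`. -/
lemma chebT_coeff_one_of_odd {d : ℕ} (hd : Odd d) :
    (chebT d).coeff 1 = d * (((d : ℤ) - 1) / 2).negOnePow := by
  have hT : (Chebyshev.T ℤ d).coeff 1 = d * (((d : ℤ) - 1) / 2).negOnePow := by
    have h := coeff_derivative (Chebyshev.T ℤ d) 0
    have hev : Even ((d : ℤ) - 1) := (show Odd (d : ℤ) by exact_mod_cast hd).sub_odd odd_one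
    rw [coeff_zero_eq_eval_zero, Chebyshev.T_derivative_eq_U, eval_mul,
      Chebyshev.U_eval_zero_of_even ℤ hev] at h
    simpa only [Int.cast_natCast, Int.cast_id, eval_natCast, Nat.cast_zero, zero_add,
      mul_one] using h.symm
  have h := congrArg (coeff · 1) (chebT_comp_two_mul_X d)
  simp only [comp_C_mul_X_coeff, pow_one, coeff_ofNat_mul, hT] at h
  linarith

lemma chebTIter_succ (ℓ n : ℕ) : chebTIter ℓ (n + 1) = (chebT ℓ).comp (chebTIter ℓ n) :=
  Function.iterate_succ_apply' _ _ _

lemma chebTIter_coeff_zero {ℓ : ℕ} (hℓ : Odd ℓ) (n : ℕ) :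
    (chebTIter ℓ n).coeff 0 = 0 := by
  induction n with
  | zero => exact coeff_X_zero
  | succ n ih =>
    rw [chebTIter_succ, coeff_zero_eq_eval_zero, eval_comp, ← coeff_zero_eq_eval_zero, ih,
      ← coeff_zero_eq_eval_zero, chebT_coeff_zero_of_odd hℓ]

lemma chebTIter_map_zmod (ℓ : ℕ) [Fact ℓ.Prime] (n : ℕ) :
    (chebTIter ℓ n).map (Int.castRingHom (ZMod ℓ)) = X ^ ℓ ^ n := by
  induction n with
  | zero => simp [chebTIter]
  | succ n ih =>
    rw [chebTIter_succ, Polynomial.map_comp, ih, chebT, map_dickson, map_one,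
      dickson_one_one_zmod_p, X_pow_comp, ← pow_mul, pow_succ]

lemma chebTIter_hasStrictMinValuationAt {ℓ : ℕ} (hℓ : ℓ.Prime) (hodd : Odd ℓ)
    (m k : ℕ) :
    HasStrictMinValuationAt (ℓ : ℤ) (chebTIter ℓ (m + k)) (ℓ ^ m) k := by
  have := Fact.mk hℓ
  induction k with
  | zero => exact .of_map_eq_X_pow (chebTIter_map_zmod ℓ m)
  | succ k ih =>
    have hp : Prime (ℓ : ℤ) := Nat.prime_iff_prime_int.mp hℓ
    have hsign : ¬ (ℓ : ℤ) ∣ (((ℓ : ℤ) - 1) / 2).negOnePow :=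
      fun h => hp.not_isUnit (isUnit_of_dvd_unit h (Units.isUnit _))
    rw [← add_assoc, chebTIter_succ,
      comp_eq_C_mul_add_sq_mul_of_coeff_zero (chebT_coeff_zero_of_odd hodd),
      chebT_coeff_one_of_odd hodd]
    exact ih.mul_add_sq_mul hp hsign (chebTIter_coeff_zero hodd _) _

theorem stmt10_general (ℓ : ℕ) (hℓ : ℓ.Prime) (hodd : Odd ℓ) (n : ℕ)
    (m i : ℕ) (hm : m ≤ n) (hi : i ≤ ℓ ^ m) :
    ((ℓ : ℤ) ^ (n - m) ∣ (chebTIter ℓ n).coeff i) ∧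
    (¬ ((ℓ : ℤ) ^ (n - m + 1) ∣ (chebTIter ℓ n).coeff i) → i = ℓ ^ m) ∧
    ((ℓ : ℤ) ^ (n - m) ∣ (chebTIter ℓ n).coeff (ℓ ^ m) ∧
      ¬ ((ℓ : ℤ) ^ (n - m + 1) ∣ (chebTIter ℓ n).coeff (ℓ ^ m))) := by
  obtain ⟨hlow, hdvd, hndvd⟩ := Nat.add_sub_cancel' hm ▸
    chebTIter_hasStrictMinValuationAt hℓ hodd m (n - m)
  refine ⟨?_, fun h => by_contra fun hne => h (hlow i (lt_of_le_of_ne hi hne)), hdvd, hndvd⟩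
  rcases hi.eq_or_lt with rfl | hlt
  · exact hdvd
  · exact (pow_dvd_pow _ (Nat.le_succ _)).trans (hlow i hlt)

/-- `ν_ℓ(c_i) ≥ n - m` is expressed as `ℓ^(n-m) ∣ c_i` (valid also when `c_i = 0`,
where the valuation is `∞`), and `ν_ℓ(c_i) = n - m` as `ℓ^(n-m) ∣ c_i` together with
`¬ ℓ^(n-m+1) ∣ c_i`. -/
theorem stmt10 (ℓ : ℕ) (hℓ : ℓ.Prime) (hodd : Odd ℓ) (n : ℕ) (hn : 1 ≤ n)
    (m i : ℕ) (hm : m ≤ n) (hi0 : 0 < i) (hi : i ≤ ℓ ^ m) :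
    ((ℓ : ℤ) ^ (n - m) ∣ (chebTIter ℓ n).coeff i) ∧
    (¬ ((ℓ : ℤ) ^ (n - m + 1) ∣ (chebTIter ℓ n).coeff i) → i = ℓ ^ m) ∧
    ((ℓ : ℤ) ^ (n - m) ∣ (chebTIter ℓ n).coeff (ℓ ^ m) ∧
      ¬ ((ℓ : ℤ) ^ (n - m + 1) ∣ (chebTIter ℓ n).coeff (ℓ ^ m))) :=
  stmt10_general ℓ hℓ hodd n m i hm hi
end

section
/- Let ℓ be an odd prime and let x be an integer with x ≢ 2 (mod ℓ) and x ≢ −2 (mod ℓ). Then U_{ℓ−1}(x) ≡ 1 (mod ℓ) or U_{ℓ−1}(x) ≡ −1 (mod ℓ); equivalently, U_{ℓ−1}(x)² ≡ 1 (mod ℓ). -/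
/-!
With `C_n` the first-kind Dickson polynomial (`C_n(y + y⁻¹) = yⁿ + y⁻ⁿ`), the Pell-type identity
`C_n² - (X² - 4) U_{n-1}² = 4` holds over any ring. Modulo a prime `ℓ` one has `C_ℓ = X^ℓ`, so
`C_ℓ(x) = x` by Fermat, and the identity becomes `(x² - 4) (U_{ℓ-1}(x)² - 1) = 0` in `ZMod ℓ`.
-/

open Polynomial

/-- The monic Chebyshev polynomial of the second kind of degree `d`,
characterized by `U_d(2 cos θ) = sin((d+1)θ)/sin θ`.
It coincides with the Dickson polynomial of the second kind with parameter `a = 1`. -/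
noncomputable def chebU (d : ℕ) : Polynomial ℤ := Polynomial.dickson 2 1 d

namespace Polynomial.Chebyshev

theorem C_sq_sub_X_sq_sub_four_mul_S_sq (R : Type*) [CommRing R] (n : ℤ) :
    C R n ^ 2 - (X ^ 2 - 4) * S R (n - 1) ^ 2 = 4 := by
  have hS := S_sq_add_S_sq R (n - 1)
  rw [sub_add_cancel] at hS
  linear_combination
    (C R n + 2 * S R n - X * S R (n - 1)) * C_eq_S_sub_X_mul_S R n + 4 * hS

theorem C_eval_prime_zmod (p : ℕ) [Fact p.Prime] (x : ZMod p) : (C (ZMod p) p).eval x = x := by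
  rw [← dickson_one_one_eq_chebyshev_C, dickson_one_one_zmod_p, eval_pow, eval_X, ZMod.pow_card]

theorem S_eval_pred_prime_zmod_sq (p : ℕ) [Fact p.Prime] {x : ZMod p} (hx : x ^ 2 - 4 ≠ 0) :
    (S (ZMod p) (p - 1)).eval x ^ 2 = 1 := by
  have h := congrArg (eval x) (C_sq_sub_X_sq_sub_four_mul_S_sq (ZMod p) p)
  simp only [eval_sub, eval_mul, eval_pow, eval_X, eval_ofNat, C_eval_prime_zmod] at h
  exact mul_left_cancel₀ hx (by linear_combination -h)

end Polynomial.Chebyshev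

open Polynomial.Chebyshev

theorem chebU_eval_intCast {R : Type*} [CommRing R] (d : ℕ) (x : ℤ) :
    (((chebU d).eval x : ℤ) : R) = (S R d).eval (x : R) := by
  rw [chebU, dickson_two_one_eq_chebyshev_S, ← map_S (Int.castRingHom R), eval_intCast_map,
    eq_intCast, Int.cast_id]

theorem stmt12_general (ℓ : ℕ) (hℓ : ℓ.Prime) (x : ℤ)
    (h2 : ¬ ((ℓ : ℤ) ∣ x - 2)) (h2' : ¬ ((ℓ : ℤ) ∣ x + 2)) :
    (ℓ : ℤ) ∣ (chebU (ℓ - 1)).eval x - 1 ∨ (ℓ : ℤ) ∣ (chebU (ℓ - 1)).eval x + 1 := by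
  have : Fact ℓ.Prime := ⟨hℓ⟩
  simp only [← ZMod.intCast_zmod_eq_zero_iff_dvd, Int.cast_sub, Int.cast_add, Int.cast_ofNat,
    Int.cast_one] at h2 h2' ⊢
  have hx : (x : ZMod ℓ) ^ 2 - 4 ≠ 0 := by
    rw [show (x : ZMod ℓ) ^ 2 - 4 = (x - 2) * (x + 2) by ring]
    exact mul_ne_zero h2 h2'
  rw [chebU_eval_intCast, Nat.cast_pred hℓ.pos, sub_eq_zero, add_eq_zero_iff_eq_neg]
  exact sq_eq_one_iff.mp (S_eval_pred_prime_zmod_sq ℓ hx)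

theorem stmt12 (ℓ : ℕ) (hℓ : ℓ.Prime) (hodd : Odd ℓ) (x : ℤ)
    (h2 : ¬ ((ℓ : ℤ) ∣ x - 2)) (h2' : ¬ ((ℓ : ℤ) ∣ x + 2)) :
    (ℓ : ℤ) ∣ (chebU (ℓ - 1)).eval x - 1 ∨ (ℓ : ℤ) ∣ (chebU (ℓ - 1)).eval x + 1 :=
  stmt12_general ℓ hℓ x h2 h2'
end

section
/- Let ℓ be an odd prime, n ≥ 1 an integer, and t ∈ ℤ with t ≢ 2 (mod ℓ) and t ≢ −2 (mod ℓ). For i ≥ 1 let b_i denote the coefficient of x^i in the polynomial T_ℓ^n(x + t) ∈ ℤ[x]. If m and i are integers with 0 ≤ m < n (or m = n) and ℓ^m ≤ i < ℓ^{m+1} ≤ ℓ^n, then ν_ℓ(b_i) ≥ n − m, and moreover ν_ℓ(b_{ℓ^m}) = n − m exactly. -/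
open Polynomial

private lemma E_add_two (n : ℕ) :
    dickson 2 (1:ℤ) (n+2) = X * dickson 2 1 (n+1) - dickson 2 1 n := by
  rw [dickson_add_two, C_1, one_mul]

private lemma D_add_two (n : ℕ) :
    dickson 1 (1:ℤ) (n+2) = X * dickson 1 1 (n+1) - dickson 1 1 n := by
  rw [dickson_add_two, C_1, one_mul]

private lemma E_zero : dickson 2 (1:ℤ) 0 = 1 := by rw [dickson_zero]; norm_num
private lemma D_zero : dickson 1 (1:ℤ) 0 = 2 := by rw [dickson_zero]; norm_num
private lemma E_one : dickson 2 (1:ℤ) 1 = X := dickson_one 2 1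
private lemma D_one : dickson 1 (1:ℤ) 1 = X := dickson_one 1 1
private lemma E_two : dickson 2 (1:ℤ) 2 = X^2 - 1 := by
  linear_combination E_add_two 0 + X * E_one - E_zero
private lemma D_two : dickson 1 (1:ℤ) 2 = X^2 - 2 := by
  linear_combination D_add_two 0 + X * D_one - D_zero

-- L0
private lemma D_eq_E_sub (n : ℕ) :
    dickson 1 (1:ℤ) (n+2) = dickson 2 1 (n+2) - dickson 2 1 n := by
  induction n using Nat.twoStepInduction with
  | zero => linear_combination D_two - E_two + E_zero
  | one => linear_combination (D_add_two 1) - (E_add_two 1) + X * D_two - X * E_two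
      + X * E_zero - D_one + E_one + E_one - X * E_zero
  | more n ih1 ih2 =>
      linear_combination (D_add_two (n+2)) - (E_add_two (n+2)) + X * ih2 - ih1 + E_add_two n

-- L2' (Catalan)
private lemma E_catalan (n : ℕ) :
    dickson 2 (1:ℤ) (n+2) * dickson 2 1 n = (dickson 2 1 (n+1))^2 - 1 := by
  induction n with
  | zero => linear_combination dickson 2 (1:ℤ) 0 * E_two + (X^2-1) * E_zero
      - (dickson 2 (1:ℤ) 1 + X) * E_one
  | succ n ih =>
      linear_combination dickson 2 (1:ℤ) (n+1) * E_add_two (n+1) + ih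
        - dickson 2 (1:ℤ) (n+2) * E_add_two n

-- L1
private lemma D_derivative : ∀ n : ℕ,
    derivative (dickson 1 (1:ℤ) (n+1)) = ((n : ℤ[X]) + 1) * dickson 2 1 n := by
  intro n
  induction n using Nat.twoStepInduction with
  | zero =>
      rw [show dickson 1 (1:ℤ) (0+1) = X from D_one, E_zero]
      simp
  | one =>
      rw [show dickson 1 (1:ℤ) (1+1) = X^2-2 from D_two, E_one]
      simp [derivative_sub]
      ring
  | more n ih1 ih2 =>
      have step : dickson 1 (1:ℤ) (n+2+1) = X * dickson 1 1 (n+2) - dickson 1 1 (n+1) :=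
        D_add_two (n+1)
      rw [step, derivative_sub, derivative_mul, derivative_X, ih1,
        show derivative (dickson 1 (1:ℤ) (n+2)) = (((n+1 : ℕ) : ℤ[X]) + 1) * dickson 2 1 (n+1)
          from ih2]
      push_cast
      linear_combination D_eq_E_sub n - ((n:ℤ[X])+2) * E_add_two n

-- L2 (Pell)
private lemma pell : ∀ n : ℕ,
    (X^2 - 4) * (dickson 2 (1:ℤ) n)^2 = (dickson 1 1 (n+1))^2 - 4 := by
  intro n
  cases n with
  | zero =>
      linear_combination (X^2-4)*(dickson 2 (1:ℤ) 0 + 1) * E_zero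
        - (dickson 1 (1:ℤ) 1 + X) * D_one
  | succ n =>
      linear_combination
        (-(dickson 1 (1:ℤ) (n+2)) - dickson 2 1 (n+2) + dickson 2 1 n) * D_eq_E_sub n
        + (-(dickson 2 (1:ℤ) (n+2)) - dickson 2 1 n - X * dickson 2 1 (n+1)) * E_add_two n
        + 4 * E_catalan n

private noncomputable def Fp (ℓ : ℕ) (t : ℤ) (n : ℕ) : ℤ[X] :=
  (chebTIter ℓ n).comp (X + C t)

private lemma Fp_zero (ℓ : ℕ) (t : ℤ) : Fp ℓ t 0 = X + C t := by
  simp [Fp, chebTIter]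

private lemma Fp_succ (ℓ : ℕ) (t : ℤ) (n : ℕ) :
    Fp ℓ t (n+1) = (chebT ℓ).comp (Fp ℓ t n) := by
  unfold Fp chebTIter
  rw [Function.iterate_succ_apply', comp_assoc]

-- monicity / degree of dickson
private lemma D_monic_natDegree : ∀ n : ℕ,
    (dickson 1 (1:ℤ) (n+1)).Monic ∧ (dickson 1 (1:ℤ) (n+1)).natDegree = n+1 := by
  intro n
  induction n using Nat.twoStepInduction with
  | zero => exact ⟨monic_X, natDegree_X⟩
  | one =>
      constructor
      · rw [show dickson 1 (1:ℤ) (1+1) = X^2 - C 2 by rw [dickson_two]; norm_num]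
        exact monic_X_pow_sub_C 2 (by norm_num)
      · rw [show dickson 1 (1:ℤ) (1+1) = X^2 - C 2 by rw [dickson_two]; norm_num]
        exact natDegree_X_pow_sub_C
  | more n ih1 ih2 =>
      have step : dickson 1 (1:ℤ) (n+2+1) = X * dickson 1 1 (n+2) - C 1 * dickson 1 1 (n+1) :=
        dickson_add_two 1 1 (n+1)
      have hm : (X * dickson 1 (1:ℤ) (n+2)).Monic := monic_X.mul ih2.1
      have hne : dickson 1 (1:ℤ) (n+2) ≠ 0 := ih2.1.ne_zero
      have hdeg : (X * dickson 1 (1:ℤ) (n+2)).natDegree = n+3 := by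
        rw [natDegree_mul X_ne_zero hne, natDegree_X, ih2.2]; omega
      have hlow : (C 1 * dickson 1 (1:ℤ) (n+1)).natDegree < (X * dickson 1 (1:ℤ) (n+2)).natDegree := by
        rw [hdeg, C_1, one_mul, ih1.2]; omega
      constructor
      · rw [step]
        exact hm.sub_of_left (degree_lt_degree hlow)
      · rw [step, natDegree_sub_eq_left_of_natDegree_lt hlow, hdeg]

private lemma chebT_monic_natDegree {ℓ : ℕ} (hℓ : 1 ≤ ℓ) :
    (chebT ℓ).Monic ∧ (chebT ℓ).natDegree = ℓ := by
  obtain ⟨k, rfl⟩ : ∃ k, ℓ = k + 1 := ⟨ℓ - 1, by omega⟩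
  exact D_monic_natDegree k

private lemma Fp_monic_natDegree {ℓ : ℕ} (hℓ : 1 ≤ ℓ) (t : ℤ) :
    ∀ n, (Fp ℓ t n).Monic ∧ (Fp ℓ t n).natDegree = ℓ^n := by
  intro n
  induction n with
  | zero => rw [Fp_zero]; exact ⟨monic_X_add_C t, by rw [natDegree_X_add_C, pow_zero]⟩
  | succ n ih =>
      rw [Fp_succ]
      have h1 := chebT_monic_natDegree hℓ
      have hndz : (Fp ℓ t n).natDegree ≠ 0 := by
        rw [ih.2]; positivity
      constructor
      · exact h1.1.comp ih.1 hndz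
      · rw [natDegree_comp, h1.2, ih.2, pow_succ, mul_comm]

private lemma Fp_map {ℓ : ℕ} [Fact ℓ.Prime] (t : ℤ) (n : ℕ) :
    (Fp ℓ t n).map (Int.castRingHom (ZMod ℓ)) = (X + C (t : ZMod ℓ))^(ℓ^n) := by
  induction n with
  | zero => rw [Fp_zero]; simp
  | succ n ih =>
      rw [Fp_succ, map_comp, ih]
      have : (chebT ℓ).map (Int.castRingHom (ZMod ℓ)) = X ^ ℓ := by
        unfold chebT
        rw [map_dickson]
        simpa using dickson_one_one_zmod_p ℓ
      rw [this, X_pow_comp, ← pow_mul, ← pow_succ]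

private lemma pow_card_pow {ℓ : ℕ} [Fact ℓ.Prime] (x : ZMod ℓ) : ∀ n : ℕ, x ^ (ℓ^n) = x
  | 0 => pow_one x
  | n+1 => by rw [pow_succ, pow_mul, pow_card_pow x n, ZMod.pow_card]

private lemma Fp_eval_zero_mod {ℓ : ℕ} [Fact ℓ.Prime] (t : ℤ) (n : ℕ) :
    (((Fp ℓ t n).eval 0 : ℤ) : ZMod ℓ) = (t : ZMod ℓ) := by
  have h0 : ((Fp ℓ t n).map (Int.castRingHom (ZMod ℓ))).eval (((0:ℤ) : ZMod ℓ))
      = (((Fp ℓ t n).eval 0 : ℤ) : ZMod ℓ) := by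
    rw [eval_intCast_map]; rfl
  rw [← h0, Fp_map]
  simp only [eval_pow, eval_add, eval_X, eval_C, Int.cast_zero, zero_add]
  exact pow_card_pow _ n

private lemma coeff_dvd_of_mem_span {p : ℤ[X]} {r : ℤ} {N i : ℕ}
    (hp : p ∈ Ideal.span ({C r, X ^ N} : Set ℤ[X])) (hi : i < N) : r ∣ p.coeff i := by
  obtain ⟨a, b, hab⟩ := Ideal.mem_span_pair.mp hp
  have h := congrArg (fun q : ℤ[X] => q.coeff i) hab
  simp only [coeff_add, coeff_mul_C] at h
  rw [coeff_mul_X_pow', if_neg (by omega)] at h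
  exact ⟨a.coeff i, by linarith [h]⟩

private lemma dvd_coeffs_factor {p : ℤ[X]} {r : ℤ}
    (h : ∀ i, r ∣ p.coeff i) : ∃ q : ℤ[X], p = C r * q := by
  obtain ⟨q, hq⟩ := (C_dvd_iff_dvd_coeff r p).mpr h
  exact ⟨q, hq⟩

/-- all coefficients of `p` are divisible by `ℓ` iff its reduction is zero. -/
private lemma dvd_coeff_of_map_eq_zero {ℓ : ℕ} {p : ℤ[X]}
    (h : p.map (Int.castRingHom (ZMod ℓ)) = 0) : ∀ i, (ℓ:ℤ) ∣ p.coeff i := by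
  intro i
  have := congrArg (fun q : (ZMod ℓ)[X] => q.coeff i) h
  simp only [coeff_map, coeff_zero] at this
  exact (ZMod.intCast_zmod_eq_zero_iff_dvd _ ℓ).mp this

-- Taylor decomposition of a composition
private lemma comp_taylor (D q : ℤ[X]) (c : ℤ) :
    ∃ w : ℤ[X], D.comp (q + C c)
      = C (D.eval c) + C (D.derivative.eval c) * q + q^2 * w := by
  set P : ℤ[X] := (taylor c) D with hP
  have hdvd : X^2 ∣ P - C (P.coeff 0) - C (P.coeff 1) * X := by
    rw [X_pow_dvd_iff]
    intro d hd
    interval_cases d <;> simp only [coeff_sub, coeff_C, coeff_C_mul, coeff_X] <;> norm_num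
  obtain ⟨w0, hw0⟩ := hdvd
  have hPdec : P = C (P.coeff 0) + C (P.coeff 1) * X + X^2 * w0 := by
    rw [← hw0]; ring
  have hcomp : D.comp (q + C c) = P.comp q := by
    rw [hP, taylor_apply, comp_assoc, add_comp, X_comp, C_comp]
  refine ⟨w0.comp q, ?_⟩
  rw [hcomp, hPdec]
  rw [add_comp, add_comp, mul_comp, mul_comp, pow_comp, C_comp, C_comp, X_comp,
    taylor_coeff_zero, taylor_coeff_one]

private lemma chebT_derivative {ℓ : ℕ} (hℓ : 1 ≤ ℓ) :
    derivative (chebT ℓ) = (ℓ : ℤ[X]) * dickson 2 1 (ℓ-1) := by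
  obtain ⟨k, rfl⟩ : ∃ k, ℓ = k+1 := ⟨ℓ-1, by omega⟩
  unfold chebT
  rw [D_derivative k]
  push_cast
  simp

private lemma chebT_C1 {ℓ : ℕ} [Fact ℓ.Prime] {t c : ℤ}
    (hc : ((c : ℤ) : ZMod ℓ) = (t : ZMod ℓ))
    (ht2 : ¬ ((ℓ : ℤ) ∣ t - 2)) (ht2' : ¬ ((ℓ : ℤ) ∣ t + 2)) :
    ∃ e : ℤ, (derivative (chebT ℓ)).eval c = ℓ * e ∧ ¬ (ℓ:ℤ) ∣ e := by
  have hp : ℓ.Prime := Fact.out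
  have hℓ1 : 1 ≤ ℓ := hp.one_lt.le
  refine ⟨(dickson 2 1 (ℓ-1)).eval c, ?_, ?_⟩
  · rw [chebT_derivative hℓ1]
    simp
  · intro hdvd
    have hE0 : (((dickson 2 1 (ℓ-1)).eval c : ℤ) : ZMod ℓ) = 0 :=
      (ZMod.intCast_zmod_eq_zero_iff_dvd _ ℓ).mpr hdvd
    -- evaluate Pell identity at c
    have hpell := congrArg (fun p : ℤ[X] => ((p.eval c : ℤ) : ZMod ℓ)) (pell (ℓ-1))
    have hidx : ℓ - 1 + 1 = ℓ := by omega
    rw [hidx] at hpell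
    simp only [eval_mul, eval_pow, eval_sub, eval_X, eval_ofNat, Int.cast_mul,
      Int.cast_pow, Int.cast_sub, Int.cast_ofNat] at hpell
    rw [hE0] at hpell
    -- D_ℓ(c) ≡ c mod ℓ
    have hD : (((dickson 1 1 ℓ).eval c : ℤ) : ZMod ℓ) = (c : ZMod ℓ) := by
      have h1 := eval_intCast_map (Int.castRingHom (ZMod ℓ)) (dickson 1 (1:ℤ) ℓ) c
      rw [map_dickson] at h1
      simp only [map_one] at h1
      rw [dickson_one_one_zmod_p ℓ] at h1
      simp only [eval_pow, eval_X, eq_intCast, Int.cast_id] at h1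
      rw [← h1, ZMod.pow_card]
    rw [hD, hc] at hpell
    -- now hpell : (t̄^2 - 4) * 0 = t̄^2 - 4  (approximately)
    have h2 : ((t : ZMod ℓ) - 2) * ((t : ZMod ℓ) + 2) = 0 := by
      have : ((t : ZMod ℓ)^2 - 4) = 0 := by linear_combination -hpell
      linear_combination this
    have hn2 : ((t : ZMod ℓ) - 2) ≠ 0 := by
      intro h
      apply ht2
      rw [← ZMod.intCast_zmod_eq_zero_iff_dvd]
      push_cast
      exact h
    have hn2' : ((t : ZMod ℓ) + 2) ≠ 0 := by
      intro h
      apply ht2'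
      rw [← ZMod.intCast_zmod_eq_zero_iff_dvd]
      push_cast
      exact h
    exact (mul_ne_zero hn2 hn2') h2

private lemma Fp_div {ℓ : ℕ} [Fact ℓ.Prime] (t : ℤ) :
    ∀ a m : ℕ, 1 ≤ a → ∃ c : ℤ,
      Fp ℓ t (m + a) - C c ∈ Ideal.span ({C ((ℓ:ℤ)^a), X ^ (ℓ^(m+1))} : Set ℤ[X]) := by
  have hp : ℓ.Prime := Fact.out
  intro a
  induction a with
  | zero => omega
  | succ a ih =>
      intro m _
      rcases Nat.eq_zero_or_pos a with rfl | ha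
      · -- base case a = 1
        refine ⟨t^(ℓ^(m+1)), ?_⟩
        have hq : ∀ i, (ℓ:ℤ) ∣ (Fp ℓ t (m+1) - C (t^(ℓ^(m+1))) - X^(ℓ^(m+1))).coeff i := by
          apply dvd_coeff_of_map_eq_zero
          rw [Polynomial.map_sub, Polynomial.map_sub, Polynomial.map_pow, map_X, map_C,
            Fp_map]
          have hfrob : (X + C ((t : ZMod ℓ)))^(ℓ^(m+1)) = X^(ℓ^(m+1)) + C ((t:ZMod ℓ))^(ℓ^(m+1)) :=
            add_pow_char_pow X (C ((t : ZMod ℓ))) ℓ (m+1)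
          rw [hfrob, eq_intCast, Int.cast_pow, C_pow]
          ring
        obtain ⟨w, hw⟩ := dvd_coeffs_factor hq
        rw [Ideal.mem_span_pair]
        refine ⟨w, 1, ?_⟩
        rw [pow_one]
        linear_combination -hw
      · -- inductive step, a ≥ 1
        obtain ⟨c, hc⟩ := ih m ha
        set N := ℓ^(m+1) with hN
        set h' : ℤ[X] := Fp ℓ t (m+a) - C c with hh'
        obtain ⟨y, z, hyz⟩ := Ideal.mem_span_pair.mp hc
        obtain ⟨w, hw⟩ := comp_taylor (chebT ℓ) h' c
        have hsum : h' + C c = Fp ℓ t (m+a) := by rw [hh']; ring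
        have key : Fp ℓ t (m+(a+1)) - C ((chebT ℓ).eval c)
            = C ((derivative (chebT ℓ)).eval c) * h' + h'^2 * w := by
          have : Fp ℓ t (m+(a+1)) = (chebT ℓ).comp (Fp ℓ t (m+a)) := Fp_succ ℓ t (m+a)
          rw [this, ← hsum, hw]
          ring
        refine ⟨(chebT ℓ).eval c, ?_⟩
        rw [key]
        set J := Ideal.span ({C ((ℓ:ℤ)^(a+1)), X ^ N} : Set ℤ[X]) with hJ
        have hCl : C ((ℓ:ℤ)^(a+1)) ∈ J := Ideal.subset_span (by simp)
        have hXN : (X:ℤ[X])^N ∈ J := Ideal.subset_span (by simp)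
        have hder : (derivative (chebT ℓ)).eval c = (ℓ:ℤ) * (dickson 2 1 (ℓ-1)).eval c := by
          rw [chebT_derivative hp.one_lt.le]
          simp
        set e : ℤ := (dickson 2 1 (ℓ-1)).eval c with he
        apply Ideal.add_mem
        · have hA : C ((ℓ:ℤ)^(a+1)) = C ((ℓ:ℤ)^a) * C (ℓ:ℤ) := by
            rw [← C_mul, ← pow_succ]
          have hB : C ((ℓ:ℤ) * e) = C (ℓ:ℤ) * C e := C_mul
          have h1 : C ((ℓ:ℤ) * e) * h' = (C e * y) * C ((ℓ:ℤ)^(a+1)) + (C ((ℓ:ℤ) * e) * z) * X^N := by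
            rw [hA, hB, ← hyz]
            ring
          rw [hder, h1]
          exact Ideal.add_mem _ (Ideal.mul_mem_left _ _ hCl) (Ideal.mul_mem_left _ _ hXN)
        · apply Ideal.mul_mem_right
          have hC : C ((ℓ:ℤ)^(a+1)) * C ((ℓ:ℤ)^(a-1)) = C ((ℓ:ℤ)^a) * C ((ℓ:ℤ)^a) := by
            rw [← C_mul, ← C_mul, ← pow_add, ← pow_add,
              show a+1+(a-1) = a+a from by omega]
          have h2 : h'^2 = (y^2 * C ((ℓ:ℤ)^(a-1))) * C ((ℓ:ℤ)^(a+1))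
              + (2*y*z*C ((ℓ:ℤ)^a) + z^2 * X^N) * X^N := by
            rw [← hyz]
            linear_combination (-(y^2)) * hC
          rw [h2]
          exact Ideal.add_mem _ (Ideal.mul_mem_left _ _ hCl) (Ideal.mul_mem_left _ _ hXN)

private lemma mul_coeff_div {r : ℤ} {q W : ℤ[X]} {M : ℕ}
    (hq : ∀ u, u < M → r ∣ q.coeff u) : ∀ j, j < M → r ∣ (q * W).coeff j := by
  intro j hj
  rw [coeff_mul]
  apply Finset.dvd_sum
  rintro ⟨u, v⟩ hmem
  have huv : u + v = j := Finset.HasAntidiagonal.mem_antidiagonal.mp hmem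
  exact (hq u (by omega)).mul_right _

private lemma sq_mul_coeff_div {r : ℤ} {q W : ℤ[X]} {M : ℕ}
    (h0 : q.coeff 0 = 0) (hq : ∀ u, u < M → r ∣ q.coeff u) :
    r^2 ∣ (q^2 * W).coeff M := by
  have h1 : ∀ v, v < M → r ∣ (q * W).coeff v := mul_coeff_div hq
  rw [show q^2 * W = q * (q * W) from by ring, coeff_mul]
  apply Finset.dvd_sum
  rintro ⟨u, v⟩ hmem
  have huv : u + v = M := Finset.HasAntidiagonal.mem_antidiagonal.mp hmem
  rcases Nat.eq_zero_or_pos u with rfl | hu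
  · rw [h0, zero_mul]
    exact dvd_zero _
  rcases Nat.eq_zero_or_pos v with rfl | hv
  · rw [mul_coeff_zero, h0, zero_mul, mul_zero]
    exact dvd_zero _
  have : r * r ∣ q.coeff u * (q * W).coeff v :=
    mul_dvd_mul (hq u (by omega)) (h1 v (by omega))
  rwa [← sq] at this

private lemma Fp_exact {ℓ : ℕ} [Fact ℓ.Prime] {t : ℤ}
    (ht2 : ¬ ((ℓ : ℤ) ∣ t - 2)) (ht2' : ¬ ((ℓ : ℤ) ∣ t + 2)) :
    ∀ a m : ℕ, ¬ ((ℓ:ℤ)^(a+1) ∣ (Fp ℓ t (m+a)).coeff (ℓ^m)) := by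
  have hp : ℓ.Prime := Fact.out
  have hpZ : Prime (ℓ:ℤ) := Nat.prime_iff_prime_int.mp hp
  intro a
  induction a with
  | zero =>
      intro m
      have hmn := Fp_monic_natDegree hp.one_lt.le t m
      have h1 : (Fp ℓ t (m+0)).coeff (ℓ^m) = 1 := by
        rw [Nat.add_zero, ← hmn.2]
        exact hmn.1.coeff_natDegree
      rw [h1]
      exact fun hdvd => hpZ.not_dvd_one (by simpa using hdvd)
  | succ a ih =>
      intro m
      -- level n = m + a, next level m + (a+1) = n + 1
      have hM1 : 1 ≤ ℓ^m := Nat.one_le_pow _ _ hp.pos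
      set c : ℤ := (Fp ℓ t (m+a)).eval 0 with hc
      set h' : ℤ[X] := Fp ℓ t (m+a) - C c with hh'
      have h'0 : h'.coeff 0 = 0 := by
        rw [hh', coeff_sub, coeff_C, if_pos rfl, coeff_zero_eq_eval_zero, hc, sub_self]
      have h'coeff : ∀ j, 1 ≤ j → h'.coeff j = (Fp ℓ t (m+a)).coeff j := by
        intro j hj
        rw [hh', coeff_sub, coeff_C, if_neg (by omega), sub_zero]
      -- small coefficients are divisible by ℓ^(a+1)
      have hsmall : ∀ u, u < ℓ^m → (ℓ:ℤ)^(a+1) ∣ h'.coeff u := by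
        intro u hu
        rcases Nat.eq_zero_or_pos u with rfl | hu1
        · rw [h'0]; exact dvd_zero _
        rcases Nat.eq_zero_or_pos m with rfl | hm1
        · rw [pow_zero] at hu; omega
        obtain ⟨c'', hc''⟩ := Fp_div (ℓ := ℓ) t (a+1) (m-1) (by omega)
        have hidx : (m-1) + (a+1) = m + a := by omega
        have hidx2 : (m-1) + 1 = m := by omega
        rw [hidx, hidx2] at hc''
        have := coeff_dvd_of_mem_span hc'' (i := u) hu
        rw [coeff_sub, coeff_C, if_neg (by omega), sub_zero] at this
        rw [h'coeff u hu1]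
        exact this
      -- the main coefficient: exactly ℓ^a
      have hdiva : (ℓ:ℤ)^a ∣ h'.coeff (ℓ^m) := by
        rcases Nat.eq_zero_or_pos a with rfl | ha1
        · simp
        obtain ⟨c'', hc''⟩ := Fp_div (ℓ := ℓ) t a m ha1
        have := coeff_dvd_of_mem_span hc'' (i := ℓ^m)
          (by exact Nat.pow_lt_pow_right hp.one_lt (by omega))
        rw [coeff_sub, coeff_C, if_neg (by omega), sub_zero] at this
        rw [h'coeff _ (by omega)]
        exact this
      have hndiva : ¬ (ℓ:ℤ)^(a+1) ∣ h'.coeff (ℓ^m) := by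
        rw [h'coeff _ (by omega)]
        exact ih m
      obtain ⟨d, hd⟩ := hdiva
      have hddvd : ¬ (ℓ:ℤ) ∣ d := by
        intro ⟨g, hg⟩
        exact hndiva ⟨g, by rw [hd, hg]; ring⟩
      -- the derivative coefficient
      have hcmod : ((c : ℤ) : ZMod ℓ) = (t : ZMod ℓ) := by
        rw [hc]; exact Fp_eval_zero_mod t (m+a)
      obtain ⟨e, hC1, hedvd⟩ := chebT_C1 hcmod ht2 ht2'
      -- decomposition
      obtain ⟨w, hw⟩ := comp_taylor (chebT ℓ) h' c
      have hsum : h' + C c = Fp ℓ t (m+a) := by rw [hh']; ring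
      have key : Fp ℓ t (m+(a+1)) = C ((chebT ℓ).eval c)
          + C ((derivative (chebT ℓ)).eval c) * h' + h'^2 * w := by
        rw [show Fp ℓ t (m+(a+1)) = (chebT ℓ).comp (Fp ℓ t (m+a)) from Fp_succ ℓ t (m+a),
          ← hsum, hw]
      -- compute the coefficient
      have hM1 : 1 ≤ ℓ^m := Nat.one_le_pow _ _ hp.pos
      have hsq : (ℓ:ℤ)^(2*(a+1)) ∣ (h'^2 * w).coeff (ℓ^m) := by
        have := sq_mul_coeff_div h'0 hsmall (W := w)
        rwa [← pow_mul, mul_comm (a+1) 2] at this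
      obtain ⟨s, hs⟩ := hsq
      have hcoeff : (Fp ℓ t (m+(a+1))).coeff (ℓ^m)
          = (ℓ:ℤ)^(a+1) * (e * d) + (ℓ:ℤ)^(2*(a+1)) * s := by
        rw [key, coeff_add, coeff_add, coeff_C, if_neg (by omega), coeff_C_mul,
          hC1, hd, hs]
        ring
      intro hdvd
      rw [hcoeff] at hdvd
      have h2a : (ℓ:ℤ)^(a+1+1) ∣ (ℓ:ℤ)^(2*(a+1)) * s :=
        Dvd.dvd.mul_right (pow_dvd_pow _ (by omega)) _
      have hED : (ℓ:ℤ)^(a+1+1) ∣ (ℓ:ℤ)^(a+1) * (e * d) := by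
        have hsub := dvd_sub hdvd h2a
        rwa [add_sub_cancel_right] at hsub
      have hne : ((ℓ:ℤ)^(a+1)) ≠ 0 := pow_ne_zero _ (Int.natCast_ne_zero.mpr hp.ne_zero)
      have hld : (ℓ:ℤ) ∣ e * d := by
        rw [pow_succ] at hED
        exact (mul_dvd_mul_iff_left hne).mp hED
      rcases hpZ.dvd_mul.mp hld with h | h
      · exact hedvd h
      · exact hddvd h

/-- Here `b i` is the coefficient of `x^i` in `T_ℓ^n(x + t)`.
`ν_ℓ(b_i) ≥ n - m` is expressed as `ℓ^(n-m) ∣ b_i` (valid also when `b_i = 0`), and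
`ν_ℓ(b_{ℓ^m}) = n - m` as divisibility by `ℓ^(n-m)` but not by `ℓ^(n-m+1)`. -/
theorem stmt13 (ℓ : ℕ) (hℓ : ℓ.Prime) (hodd : Odd ℓ) (n : ℕ) (hn : 1 ≤ n) (t : ℤ)
    (ht2 : ¬ ((ℓ : ℤ) ∣ t - 2)) (ht2' : ¬ ((ℓ : ℤ) ∣ t + 2))
    (m i : ℕ) (hm : m ≤ n) (hi1 : ℓ ^ m ≤ i) (hi2 : i < ℓ ^ (m + 1)) (hi3 : i ≤ ℓ ^ n) :
    ((ℓ : ℤ) ^ (n - m) ∣ ((chebTIter ℓ n).comp (X + C t)).coeff i) ∧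
    ((ℓ : ℤ) ^ (n - m) ∣ ((chebTIter ℓ n).comp (X + C t)).coeff (ℓ ^ m) ∧
      ¬ ((ℓ : ℤ) ^ (n - m + 1) ∣ ((chebTIter ℓ n).comp (X + C t)).coeff (ℓ ^ m))) := by
  haveI : Fact ℓ.Prime := ⟨hℓ⟩
  have hM1 : 1 ≤ ℓ^m := Nat.one_le_pow _ _ hℓ.pos
  have hMlt : ℓ^m < ℓ^(m+1) := Nat.pow_lt_pow_right hℓ.one_lt (by omega)
  have hdivgen : ∀ j, 1 ≤ j → j < ℓ^(m+1) → (ℓ:ℤ)^(n-m) ∣ (Fp ℓ t n).coeff j := by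
    intro j hj1 hj2
    rcases Nat.eq_zero_or_pos (n - m) with h0 | hpos
    · rw [h0, pow_zero]; exact one_dvd _
    obtain ⟨c, hc⟩ := Fp_div (ℓ := ℓ) t (n-m) m hpos
    rw [show m + (n-m) = n from by omega] at hc
    have := coeff_dvd_of_mem_span hc (i := j) hj2
    rwa [coeff_sub, coeff_C, if_neg (by omega), sub_zero] at this
  have hexact : ¬ ((ℓ:ℤ)^(n-m+1) ∣ (Fp ℓ t n).coeff (ℓ^m)) := by
    have := Fp_exact (ℓ := ℓ) ht2 ht2' (n-m) m
    rwa [show m + (n-m) = n from by omega] at this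
  exact ⟨hdivgen i (by omega) hi2, hdivgen (ℓ^m) hM1 hMlt, hexact⟩
end
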